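/- arXiv:2401.11418 — 10 statements merged into one kernel-verified Lean document; each statement's English description precedes it below -/
import Mathlib

section
/- Let Q ∈ ℝ^{m×n} have strictly positive entries and let a ∈ ℝ^m have strictly positive entries. Then the unique minimizer of KL̃(P|Q) over the set C₁ = {P ∈ ℝ^{m×n} : P_{ij} ≥ 0, P·1_n = a} is the matrix P* = diag(a/(Q·1_n))·Q, i.e. P*_{ij} = a_i·Q_{ij}/(Σ_{k=1}^n Q_{ik}). -/
open Real

lemma klterm_nonneg {x t : ℝ} (hx : 0 ≤ x) (ht : 0 < t) :
    0 ≤ x * Real.log (x / t) - x + t := by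
  rcases eq_or_lt_of_le hx with h | h
  · simp [← h]; linarith
  · have h1 : Real.log (t / x) ≤ t / x - 1 :=
      Real.log_le_sub_one_of_pos (by positivity)
    have h2 : Real.log (t / x) = - Real.log (x / t) := by
      rw [← Real.log_inv]; congr 1; field_simp
    have hlog : 1 - t / x ≤ Real.log (x / t) := by linarith
    have h3 : x * (1 - t / x) ≤ x * Real.log (x / t) :=
      mul_le_mul_of_nonneg_left hlog h.le
    have h4 : x * (1 - t / x) = x - t := by field_simp
    linarith

lemma klterm_pos {x t : ℝ} (hx : 0 ≤ x) (ht : 0 < t) (hne : x ≠ t) :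
    0 < x * Real.log (x / t) - x + t := by
  rcases eq_or_lt_of_le hx with h | h
  · simp [← h]; linarith
  · have hne' : t / x ≠ 1 := by
      intro hyp
      apply hne
      field_simp at hyp
      linarith
    have h1 : Real.log (t / x) < t / x - 1 :=
      Real.log_lt_sub_one_of_pos (by positivity) hne'
    have h2 : Real.log (t / x) = - Real.log (x / t) := by
      rw [← Real.log_inv]; congr 1; field_simp
    have hlog : 1 - t / x < Real.log (x / t) := by linarith
    have h3 : x * (1 - t / x) < x * Real.log (x / t) :=
      (mul_lt_mul_iff_right₀ h).mpr hlog
    have h4 : x * (1 - t / x) = x - t := by field_simp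
    linarith

/-- the KL projection of a positive matrix Q onto the set of
nonnegative matrices with row sums a is the row rescaling diag(a/(Q·1))·Q. -/
theorem kl_projection_row_constraint
    (m n : ℕ) (hm : 0 < m) (hn : 0 < n)
    (Q : Matrix (Fin m) (Fin n) ℝ) (hQ : ∀ i j, 0 < Q i j)
    (a : Fin m → ℝ) (ha : ∀ i, 0 < a i)
    (S : Set (Matrix (Fin m) (Fin n) ℝ))
    (hS : S = {P | (∀ i j, 0 ≤ P i j) ∧ (∀ i, ∑ j, P i j = a i)})
    (Pstar : Matrix (Fin m) (Fin n) ℝ)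
    (hPstar : ∀ i j, Pstar i j = a i * Q i j / (∑ k, Q i k)) :
    Pstar ∈ S ∧
    IsMinOn (fun P : Matrix (Fin m) (Fin n) ℝ =>
        ∑ i, ∑ j, (P i j * Real.log (P i j / Q i j) - P i j + Q i j)) S Pstar ∧
    (∀ P ∈ S,
      IsMinOn (fun P : Matrix (Fin m) (Fin n) ℝ =>
        ∑ i, ∑ j, (P i j * Real.log (P i j / Q i j) - P i j + Q i j)) S P →
      P = Pstar) := by
  have hne : Nonempty (Fin n) := ⟨⟨0, hn⟩⟩
  set f : Matrix (Fin m) (Fin n) ℝ → ℝ := fun P =>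
      ∑ i, ∑ j, (P i j * Real.log (P i j / Q i j) - P i j + Q i j) with hf
  set s : Fin m → ℝ := fun i => ∑ k, Q i k with hsdef
  have hs : ∀ i, 0 < s i := fun i =>
    Finset.sum_pos (fun k _ => hQ i k) Finset.univ_nonempty
  have hPpos : ∀ i j, 0 < Pstar i j := by
    intro i j
    rw [hPstar]
    exact div_pos (mul_pos (ha i) (hQ i j)) (hs i)
  have hProwstar : ∀ i, ∑ j, Pstar i j = a i := by
    intro i
    have : ∀ j, Pstar i j = a i * Q i j / s i := fun j => hPstar i j
    simp_rw [this]
    rw [← Finset.sum_div, ← Finset.mul_sum]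
    exact mul_div_cancel_right₀ (a i) (hs i).ne'
  have hmem : Pstar ∈ S := by
    rw [hS]
    exact ⟨fun i j => (hPpos i j).le, hProwstar⟩
  -- decomposition lemma
  have key : ∀ P : Matrix (Fin m) (Fin n) ℝ, (∀ i j, 0 ≤ P i j) →
      (∀ i, ∑ j, P i j = a i) →
      f P = (∑ i, ∑ j, (P i j * Real.log (P i j / Pstar i j) - P i j + Pstar i j))
        + ((∑ i, a i * Real.log (a i / s i)) + (∑ i, ∑ j, (Q i j - Pstar i j))) := by
    intro P hP0 hProw
    have hentry : ∀ i j, P i j * Real.log (P i j / Q i j) - P i j + Q i j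
        = (P i j * Real.log (P i j / Pstar i j) - P i j + Pstar i j)
          + (P i j * Real.log (a i / s i) + (Q i j - Pstar i j)) := by
      intro i j
      rcases eq_or_lt_of_le (hP0 i j) with h | h
      · rw [← h]; ring
      · have ht := hPstar i j
        have h1 : (∑ k, Q i k) ≠ 0 := (hs i).ne'
        have h2 : Q i j ≠ 0 := (hQ i j).ne'
        have h3 : a i ≠ 0 := (ha i).ne'
        have h4 : s i ≠ 0 := (hs i).ne'
        have hxq : P i j / Q i j = (P i j / Pstar i j) * (a i / s i) := by
          rw [ht]
          field_simp
          ring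
        rw [hxq, Real.log_mul (div_pos h (hPpos i j)).ne' (div_pos (ha i) (hs i)).ne']
        ring
    calc f P = ∑ i, ∑ j, ((P i j * Real.log (P i j / Pstar i j) - P i j + Pstar i j)
          + (P i j * Real.log (a i / s i) + (Q i j - Pstar i j))) := by
          exact Finset.sum_congr rfl fun i _ => Finset.sum_congr rfl fun j _ => hentry i j
      _ = (∑ i, ∑ j, (P i j * Real.log (P i j / Pstar i j) - P i j + Pstar i j))
          + ((∑ i, ∑ j, P i j * Real.log (a i / s i)) + (∑ i, ∑ j, (Q i j - Pstar i j))) := by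
          simp [Finset.sum_add_distrib]
      _ = _ := by
          congr 1
          congr 1
          refine Finset.sum_congr rfl fun i _ => ?_
          rw [← Finset.sum_mul, hProw i]
  have hfPstar : f Pstar = (∑ i, a i * Real.log (a i / s i))
      + (∑ i, ∑ j, (Q i j - Pstar i j)) := by
    have h0 : ∑ i, ∑ j, (Pstar i j * Real.log (Pstar i j / Pstar i j) - Pstar i j + Pstar i j)
        = 0 := by
      apply Finset.sum_eq_zero
      intro i _
      apply Finset.sum_eq_zero
      intro j _
      rw [div_self (hPpos i j).ne', Real.log_one]
      ring
    rw [key Pstar (fun i j => (hPpos i j).le) hProwstar, h0, zero_add]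
  have hdiff : ∀ P ∈ S,
      f P = (∑ i, ∑ j, (P i j * Real.log (P i j / Pstar i j) - P i j + Pstar i j))
        + f Pstar := by
    intro P hP
    rw [hS] at hP
    rw [key P hP.1 hP.2, hfPstar]
  refine ⟨hmem, ?_, ?_⟩
  · apply isMinOn_iff.mpr
    intro P hP
    have hd := hdiff P hP
    have hge : 0 ≤ ∑ i, ∑ j, (P i j * Real.log (P i j / Pstar i j) - P i j + Pstar i j) := by
      apply Finset.sum_nonneg
      intro i _
      apply Finset.sum_nonneg
      intro j _
      have hP' : (∀ i j, 0 ≤ P i j) ∧ (∀ i, ∑ j, P i j = a i) := by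
        rw [hS] at hP; exact hP
      exact klterm_nonneg (hP'.1 i j) (hPpos i j)
    show f Pstar ≤ f P
    linarith
  · intro P hP hmin
    have hle : f P ≤ f Pstar := isMinOn_iff.mp hmin Pstar hmem
    have hd := hdiff P hP
    have hP' : (∀ i j, 0 ≤ P i j) ∧ (∀ i, ∑ j, P i j = a i) := by
      rw [hS] at hP; exact hP
    have hnn : ∀ i ∈ Finset.univ, ∀ j ∈ Finset.univ,
        0 ≤ P i j * Real.log (P i j / Pstar i j) - P i j + Pstar i j :=
      fun i _ j _ => klterm_nonneg (hP'.1 i j) (hPpos i j)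
    have hsum0 : ∑ i, ∑ j, (P i j * Real.log (P i j / Pstar i j) - P i j + Pstar i j) = 0 := by
      have h1 : 0 ≤ ∑ i, ∑ j, (P i j * Real.log (P i j / Pstar i j) - P i j + Pstar i j) :=
        Finset.sum_nonneg fun i hi => Finset.sum_nonneg fun j hj => hnn i hi j hj
      linarith
    have hinner : ∀ i ∈ Finset.univ,
        ∑ j, (P i j * Real.log (P i j / Pstar i j) - P i j + Pstar i j) = 0 :=
      (Finset.sum_eq_zero_iff_of_nonneg
        (fun i hi => Finset.sum_nonneg fun j hj => hnn i hi j hj)).mp hsum0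
    have hterm : ∀ i j, P i j * Real.log (P i j / Pstar i j) - P i j + Pstar i j = 0 := by
      intro i j
      exact (Finset.sum_eq_zero_iff_of_nonneg
        (fun j hj => hnn i (Finset.mem_univ i) j hj)).mp
        (hinner i (Finset.mem_univ i)) j (Finset.mem_univ j)
    ext i j
    by_contra hne'
    exact (klterm_pos (hP'.1 i j) (hPpos i j) hne').ne' (hterm i j)
end

section
/- Let Q ∈ ℝ^{m×n} have strictly positive entries and let b^d ∈ ℝ^n have nonnegative entries. Then the unique minimizer of KL̃(P|Q) over the set C₂ = {P ∈ ℝ^{m×n} : P_{ij} ≥ 0, Pᵀ·1_m ≥ b^d entrywise} is P* = Q·diag(max(b^d/(Qᵀ·1_m), 1_n)), i.e. P*_{ij} = Q_{ij}·max(b^d_j/(Σ_{k=1}^m Q_{kj}), 1). -/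
open Real

/-- Basic entropy inequality: x log(x/y) - x + y ≥ 0 for x ≥ 0, y > 0. -/
lemma ent_nonneg {x y : ℝ} (hx : 0 ≤ x) (hy : 0 < y) :
    0 ≤ x * Real.log (x / y) - x + y := by
  rcases hx.eq_or_lt with h | h
  · simp [← h]; linarith
  · have h1 : Real.log (y / x) ≤ y / x - 1 :=
      Real.log_le_sub_one_of_pos (by positivity)
    have h2 : Real.log (y / x) = Real.log y - Real.log x := Real.log_div hy.ne' h.ne'
    have h3 : Real.log (x / y) = Real.log x - Real.log y := Real.log_div h.ne' hy.ne'
    have h4 : x * (y / x) = y := by field_simp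
    nlinarith [mul_le_mul_of_nonneg_left h1 h.le]

/-- Strict version: equality only at x = y. -/
lemma ent_pos {x y : ℝ} (hx : 0 ≤ x) (hy : 0 < y) (hne : x ≠ y) :
    0 < x * Real.log (x / y) - x + y := by
  rcases hx.eq_or_lt with h | h
  · simp [← h]; linarith
  · have hne1 : y / x ≠ 1 := by
      intro hcon
      apply hne
      field_simp at hcon
      linarith
    have h1 : Real.log (y / x) < y / x - 1 :=
      Real.log_lt_sub_one_of_pos (by positivity) hne1
    have h2 : Real.log (y / x) = Real.log y - Real.log x := Real.log_div hy.ne' h.ne'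
    have h3 : Real.log (x / y) = Real.log x - Real.log y := Real.log_div h.ne' hy.ne'
    have h4 : x * (y / x) = y := by field_simp
    nlinarith [mul_lt_mul_of_pos_left h1 h]

lemma ent_eq {x y : ℝ} (hx : 0 ≤ x) (hy : 0 < y)
    (h : x * Real.log (x / y) - x + y = 0) : x = y := by
  by_contra hne
  exact (ent_pos hx hy hne).ne' h

/-- Per-entry decomposition of the KL integrand against the rescaled reference. -/
lemma term_id (x q c : ℝ) (hx : 0 ≤ x) (hq : 0 < q) (hc : 0 < c) :
    x * Real.log (x / q) - x + q
      = (q * c * Real.log ((q * c) / q) - q * c + q)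
        + (x * Real.log (x / (q * c)) - x + q * c)
        + (x - q * c) * Real.log c := by
  have hqc : (q * c) / q = c := by field_simp
  rw [hqc]
  rcases hx.eq_or_lt with h | h
  · simp [← h]
    ring
  · have hqc0 : q * c ≠ 0 := by positivity
    rw [Real.log_div h.ne' hq.ne', Real.log_div h.ne' hqc0,
      Real.log_mul hq.ne' hc.ne']
    ring

/-- the KL projection of a positive matrix Q onto the set of
nonnegative matrices with column sums at least b^d is the column rescaling
Q·diag(max(b^d/(Qᵀ·1), 1)). -/
theorem kl_projection_lower_bound_constraint
    (m n : ℕ) (hm : 0 < m) (hn : 0 < n)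
    (Q : Matrix (Fin m) (Fin n) ℝ) (hQ : ∀ i j, 0 < Q i j)
    (bd : Fin n → ℝ) (hbd : ∀ j, 0 ≤ bd j)
    (S : Set (Matrix (Fin m) (Fin n) ℝ))
    (hS : S = {P | (∀ i j, 0 ≤ P i j) ∧ (∀ j, bd j ≤ ∑ i, P i j)})
    (Pstar : Matrix (Fin m) (Fin n) ℝ)
    (hPstar : ∀ i j, Pstar i j = Q i j * max (bd j / (∑ k, Q k j)) 1) :
    Pstar ∈ S ∧
    IsMinOn (fun P : Matrix (Fin m) (Fin n) ℝ =>
        ∑ i, ∑ j, (P i j * Real.log (P i j / Q i j) - P i j + Q i j)) S Pstar ∧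
    (∀ P ∈ S,
      IsMinOn (fun P : Matrix (Fin m) (Fin n) ℝ =>
        ∑ i, ∑ j, (P i j * Real.log (P i j / Q i j) - P i j + Q i j)) S P →
      P = Pstar) := by
  haveI : Nonempty (Fin m) := ⟨⟨0, hm⟩⟩
  set c : Fin n → ℝ := fun j => max (bd j / ∑ k, Q k j) 1 with hcdef
  have hsQ : ∀ j, 0 < ∑ k, Q k j := fun j =>
    Finset.sum_pos (fun i _ => hQ i j) Finset.univ_nonempty
  have hc1 : ∀ j, 1 ≤ c j := fun j => le_max_right _ _
  have hcpos : ∀ j, 0 < c j := fun j => lt_of_lt_of_le one_pos (hc1 j)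
  have hbc : ∀ j, bd j ≤ (∑ k, Q k j) * c j := by
    intro j
    have h1 : bd j / (∑ k, Q k j) ≤ c j := le_max_left _ _
    calc bd j = (bd j / ∑ k, Q k j) * (∑ k, Q k j) :=
          (div_mul_cancel₀ _ (hsQ j).ne').symm
      _ ≤ c j * (∑ k, Q k j) := mul_le_mul_of_nonneg_right h1 (hsQ j).le
      _ = (∑ k, Q k j) * c j := mul_comm _ _
  have hPstarsum : ∀ j, ∑ i, Pstar i j = (∑ k, Q k j) * c j := by
    intro j
    rw [Finset.sum_mul]
    exact Finset.sum_congr rfl fun i _ => hPstar i j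
  have hPmem : Pstar ∈ S := by
    rw [hS]
    refine ⟨fun i j => ?_, fun j => ?_⟩
    · rw [hPstar]
      exact mul_nonneg (hQ i j).le (hcpos j).le
    · rw [hPstarsum j]
      exact hbc j
  -- gap decomposition
  have gap : ∀ P : Matrix (Fin m) (Fin n) ℝ, (∀ i j, 0 ≤ P i j) →
      (∑ i, ∑ j, (P i j * Real.log (P i j / Q i j) - P i j + Q i j))
        - (∑ i, ∑ j, (Pstar i j * Real.log (Pstar i j / Q i j) - Pstar i j + Q i j))
      = ∑ j, ((∑ i, (P i j * Real.log (P i j / (Q i j * c j)) - P i j + Q i j * c j))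
          + ((∑ i, P i j) - (∑ k, Q k j) * c j) * Real.log (c j)) := by
    intro P hP
    have comm : ∀ f : Fin m → Fin n → ℝ, ∑ i, ∑ j, f i j = ∑ j, ∑ i, f i j :=
      fun f => Finset.sum_comm
    rw [comm, comm, ← Finset.sum_sub_distrib]
    refine Finset.sum_congr rfl fun j _ => ?_
    have key : ∀ i, P i j * Real.log (P i j / Q i j) - P i j + Q i j
        = (Pstar i j * Real.log (Pstar i j / Q i j) - Pstar i j + Q i j)
          + (P i j * Real.log (P i j / (Q i j * c j)) - P i j + Q i j * c j)
          + (P i j - Q i j * c j) * Real.log (c j) := by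
      intro i
      have hti := term_id (P i j) (Q i j) (c j) (hP i j) (hQ i j) (hcpos j)
      rw [hPstar i j]
      exact hti
    calc (∑ i, (P i j * Real.log (P i j / Q i j) - P i j + Q i j))
          - (∑ i, (Pstar i j * Real.log (Pstar i j / Q i j) - Pstar i j + Q i j))
        = ∑ i, ((P i j * Real.log (P i j / (Q i j * c j)) - P i j + Q i j * c j)
            + (P i j - Q i j * c j) * Real.log (c j)) := by
          rw [← Finset.sum_sub_distrib]
          refine Finset.sum_congr rfl fun i _ => ?_
          rw [key i]; ring
      _ = (∑ i, (P i j * Real.log (P i j / (Q i j * c j)) - P i j + Q i j * c j))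
            + (∑ i, (P i j - Q i j * c j)) * Real.log (c j) := by
          rw [Finset.sum_add_distrib, Finset.sum_mul]
      _ = (∑ i, (P i j * Real.log (P i j / (Q i j * c j)) - P i j + Q i j * c j))
            + ((∑ i, P i j) - (∑ k, Q k j) * c j) * Real.log (c j) := by
          rw [Finset.sum_sub_distrib, ← Finset.sum_mul]
  -- nonnegativity of the pieces
  have hg : ∀ (P : Matrix (Fin m) (Fin n) ℝ), (∀ i j, 0 ≤ P i j) → ∀ i j,
      0 ≤ P i j * Real.log (P i j / (Q i j * c j)) - P i j + Q i j * c j := by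
    intro P hP i j
    exact ent_nonneg (hP i j) (mul_pos (hQ i j) (hcpos j))
  have hT : ∀ (P : Matrix (Fin m) (Fin n) ℝ), (∀ j, bd j ≤ ∑ i, P i j) → ∀ j,
      0 ≤ ((∑ i, P i j) - (∑ k, Q k j) * c j) * Real.log (c j) := by
    intro P hPsum j
    rcases le_or_gt (bd j / ∑ k, Q k j) 1 with h | h
    · have hcj : c j = 1 := max_eq_right h
      simp [hcj]
    · have hcj : c j = bd j / ∑ k, Q k j := max_eq_left h.le
      have hQc : (∑ k, Q k j) * c j = bd j := by
        rw [hcj, mul_comm, div_mul_cancel₀ _ (hsQ j).ne']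
      apply mul_nonneg
      · rw [hQc]; linarith [hPsum j]
      · exact Real.log_nonneg (hc1 j)
  have hcol_nonneg : ∀ (P : Matrix (Fin m) (Fin n) ℝ), P ∈ S → ∀ j,
      0 ≤ (∑ i, (P i j * Real.log (P i j / (Q i j * c j)) - P i j + Q i j * c j))
          + ((∑ i, P i j) - (∑ k, Q k j) * c j) * Real.log (c j) := by
    intro P hPS j
    rw [hS] at hPS
    exact add_nonneg (Finset.sum_nonneg fun i _ => hg P hPS.1 i j) (hT P hPS.2 j)
  have hmin : IsMinOn (fun P : Matrix (Fin m) (Fin n) ℝ =>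
      ∑ i, ∑ j, (P i j * Real.log (P i j / Q i j) - P i j + Q i j)) S Pstar := by
    rw [isMinOn_iff]
    intro P hPS
    have hP0 : ∀ i j, 0 ≤ P i j := by rw [hS] at hPS; exact hPS.1
    have := gap P hP0
    have hnn : 0 ≤ (∑ i, ∑ j, (P i j * Real.log (P i j / Q i j) - P i j + Q i j))
        - (∑ i, ∑ j, (Pstar i j * Real.log (Pstar i j / Q i j) - Pstar i j + Q i j)) := by
      rw [this]
      exact Finset.sum_nonneg fun j _ => hcol_nonneg P hPS j
    exact sub_nonneg.mp hnn
  refine ⟨hPmem, hmin, ?_⟩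
  intro P hPS hPmin
  have hP0 : ∀ i j, 0 ≤ P i j := by rw [hS] at hPS; exact hPS.1
  have h1 : (∑ i, ∑ j, (P i j * Real.log (P i j / Q i j) - P i j + Q i j))
      ≤ (∑ i, ∑ j, (Pstar i j * Real.log (Pstar i j / Q i j) - Pstar i j + Q i j)) :=
    isMinOn_iff.mp hPmin Pstar hPmem
  have h2 : (∑ i, ∑ j, (Pstar i j * Real.log (Pstar i j / Q i j) - Pstar i j + Q i j))
      ≤ (∑ i, ∑ j, (P i j * Real.log (P i j / Q i j) - P i j + Q i j)) :=
    isMinOn_iff.mp hmin P hPS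
  have heq : ∑ j, ((∑ i, (P i j * Real.log (P i j / (Q i j * c j)) - P i j + Q i j * c j))
      + ((∑ i, P i j) - (∑ k, Q k j) * c j) * Real.log (c j)) = 0 := by
    rw [← gap P hP0]; linarith
  have hcols := (Finset.sum_eq_zero_iff_of_nonneg
    (fun j _ => hcol_nonneg P hPS j)).mp heq
  have hentry : ∀ i j, P i j * Real.log (P i j / (Q i j * c j)) - P i j + Q i j * c j = 0 := by
    intro i j
    have hj := hcols j (Finset.mem_univ j)
    have hA : ∑ i, (P i j * Real.log (P i j / (Q i j * c j)) - P i j + Q i j * c j) = 0 := by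
      have hAnn : 0 ≤ ∑ i, (P i j * Real.log (P i j / (Q i j * c j)) - P i j + Q i j * c j) :=
        Finset.sum_nonneg fun i _ => hg P hP0 i j
      have hTnn := hT P (by rw [hS] at hPS; exact hPS.2) j
      linarith
    exact (Finset.sum_eq_zero_iff_of_nonneg (fun i _ => hg P hP0 i j)).mp hA i
      (Finset.mem_univ i)
  funext i j
  have := ent_eq (hP0 i j) (mul_pos (hQ i j) (hcpos j)) (hentry i j)
  rw [this, hPstar i j]
end

section
/- Let Q ∈ ℝ^{m×n} have strictly positive entries and let b^u ∈ ℝ^n have nonnegative entries. Then the unique minimizer of KL̃(P|Q) over the set C₃ = {P ∈ ℝ^{m×n} : P_{ij} ≥ 0, Pᵀ·1_m ≤ b^u entrywise} is P* = Q·diag(min(b^u/(Qᵀ·1_m), 1_n)), i.e. P*_{ij} = Q_{ij}·min(b^u_j/(Σ_{k=1}^m Q_{kj}), 1). -/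
open Real

private lemma klF_nonneg {p b : ℝ} (hp : 0 ≤ p) (hb : 0 < b) :
    0 ≤ p * Real.log (p / b) - p + b := by
  rcases hp.eq_or_lt with h | h
  · simp [← h]; linarith
  · have hbp : 0 < b / p := by positivity
    have h1 : Real.log (b / p) ≤ b / p - 1 := Real.log_le_sub_one_of_pos hbp
    have h2 : p * Real.log (b / p) ≤ p * (b / p - 1) :=
      mul_le_mul_of_nonneg_left h1 h.le
    have h3 : p * (b / p - 1) = b - p := by field_simp
    rw [Real.log_div hb.ne' h.ne'] at h2
    rw [Real.log_div h.ne' hb.ne']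
    nlinarith

private lemma klF_pos {p b : ℝ} (hp : 0 ≤ p) (hb : 0 < b) (hne : p ≠ b) :
    0 < p * Real.log (p / b) - p + b := by
  rcases hp.eq_or_lt with h | h
  · simp [← h]; linarith
  · have hbp : 0 < b / p := by positivity
    have hne1 : b / p ≠ 1 := by
      intro hh
      exact hne ((div_eq_one_iff_eq h.ne').mp hh).symm
    have h1 : Real.log (b / p) < b / p - 1 := Real.log_lt_sub_one_of_pos hbp hne1
    have h2 : p * Real.log (b / p) < p * (b / p - 1) :=
      mul_lt_mul_of_pos_left h1 h
    have h3 : p * (b / p - 1) = b - p := by field_simp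
    rw [Real.log_div hb.ne' h.ne'] at h2
    rw [Real.log_div h.ne' hb.ne']
    nlinarith

private lemma entry_identity {p q : ℝ} (c : ℝ) (hp : 0 ≤ p) (hq : 0 < q) :
    p * Real.log (p / q) - p + q - (c * p + q * (1 - Real.exp c))
      = p * Real.log (p / (q * Real.exp c)) - p + q * Real.exp c := by
  rcases hp.eq_or_lt with h | h
  · rw [← h]; ring
  · have hl : Real.log (p / (q * Real.exp c)) = Real.log (p / q) - c := by
      rw [Real.log_div h.ne' (by positivity), Real.log_div h.ne' hq.ne',
        Real.log_mul hq.ne' (Real.exp_ne_zero c), Real.log_exp]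
      ring
    rw [hl]; ring

private lemma col_lemma {m : ℕ} (hm : 0 < m) (q p : Fin m → ℝ) (hq : ∀ i, 0 < q i)
    (b : ℝ) (hb : 0 ≤ b) (hp : ∀ i, 0 ≤ p i) (hps : ∑ i, p i ≤ b)
    (t : ℝ) (ht : t = min (b / ∑ i, q i) 1) :
    (∑ i, (q i * t * Real.log (q i * t / q i) - q i * t + q i))
      ≤ (∑ i, (p i * Real.log (p i / q i) - p i + q i)) ∧
    (∀ i₀, p i₀ ≠ q i₀ * t →
      (∑ i, (q i * t * Real.log (q i * t / q i) - q i * t + q i))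
        < ∑ i, (p i * Real.log (p i / q i) - p i + q i)) := by
  have hne : (Finset.univ : Finset (Fin m)).Nonempty := ⟨⟨0, hm⟩, Finset.mem_univ _⟩
  have hs : 0 < ∑ i, q i := Finset.sum_pos (fun i _ => hq i) hne
  rcases hb.eq_or_lt with hb0 | hb0
  · -- b = 0
    have ht0 : t = 0 := by rw [ht, ← hb0]; simp
    have hp0 : ∀ i, p i = 0 := by
      intro i
      have h1 : ∑ i, p i = 0 := le_antisymm (by rw [← hb0] at hps; exact hps)
        (Finset.sum_nonneg fun i _ => hp i)
      exact (Finset.sum_eq_zero_iff_of_nonneg (fun i _ => hp i)).mp h1 i (Finset.mem_univ i)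
    constructor
    · refine le_of_eq (Finset.sum_congr rfl fun i _ => ?_)
      rw [hp0 i, ht0]; simp
    · intro i₀ hi₀
      exact absurd (by rw [hp0 i₀, ht0, mul_zero]) hi₀
  · -- b > 0
    have ht0 : 0 < t := by rw [ht]; exact lt_min (by positivity) one_pos
    have ht1 : t ≤ 1 := by rw [ht]; exact min_le_right _ _
    set c := Real.log t with hc
    have hec : Real.exp c = t := Real.exp_log ht0
    have key : ∀ i, c * p i + q i * (1 - t) ≤ p i * Real.log (p i / q i) - p i + q i := by
      intro i
      have h0 : 0 ≤ p i * Real.log (p i / (q i * Real.exp c)) - p i + q i * Real.exp c :=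
        klF_nonneg (hp i) (mul_pos (hq i) (Real.exp_pos c))
      have h1 := entry_identity (p := p i) (q := q i) c (hp i) (hq i)
      rw [hec] at h0 h1
      linarith
    have keys : ∀ i, p i ≠ q i * t →
        c * p i + q i * (1 - t) < p i * Real.log (p i / q i) - p i + q i := by
      intro i hnei
      have hnei' : p i ≠ q i * Real.exp c := by rw [hec]; exact hnei
      have h0 : 0 < p i * Real.log (p i / (q i * Real.exp c)) - p i + q i * Real.exp c :=
        klF_pos (hp i) (mul_pos (hq i) (Real.exp_pos c)) hnei'
      have h1 := entry_identity (p := p i) (q := q i) c (hp i) (hq i)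
      rw [hec] at h0 h1
      linarith
    have hB : ∑ i, (c * p i + q i * (1 - t)) = c * (∑ i, p i) + (∑ i, q i) * (1 - t) := by
      rw [Finset.sum_add_distrib, ← Finset.mul_sum, ← Finset.sum_mul]
    have hstar : ∑ i, (q i * t * Real.log (q i * t / q i) - q i * t + q i)
        = c * (t * ∑ i, q i) + (∑ i, q i) * (1 - t) := by
      have h1 : ∀ i ∈ (Finset.univ : Finset (Fin m)),
          q i * t * Real.log (q i * t / q i) - q i * t + q i
            = c * (q i * t) + q i * (1 - t) := by
        intro i _
        have h2 : q i * t / q i = t := by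
          rw [mul_comm, mul_div_assoc, div_self (hq i).ne', mul_one]
        rw [h2]; ring
      rw [Finset.sum_congr rfl h1, Finset.sum_add_distrib, ← Finset.mul_sum,
        ← Finset.sum_mul, ← Finset.sum_mul]
      ring
    have hcs : c * (t * ∑ i, q i) ≤ c * ∑ i, p i := by
      rcases eq_or_lt_of_le ht1 with h1 | h1
      · have hc0 : c = 0 := by rw [hc, h1, Real.log_one]
        simp [hc0]
      · have hbs : b / ∑ i, q i < 1 := by
          rcases le_or_gt 1 (b / ∑ i, q i) with h | h
          · rw [ht, min_eq_right h] at h1; exact absurd h1 (lt_irrefl 1)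
          · exact h
        have htb : t * ∑ i, q i = b := by
          rw [ht, min_eq_left hbs.le]
          field_simp
        have hcneg : c ≤ 0 := Real.log_nonpos ht0.le ht1
        rw [htb]
        exact mul_le_mul_of_nonpos_left hps hcneg
    have hsumB_le : ∑ i, (c * p i + q i * (1 - t))
        ≤ ∑ i, (p i * Real.log (p i / q i) - p i + q i) :=
      Finset.sum_le_sum fun i _ => key i
    constructor
    · rw [hstar]; linarith
    · intro i₀ hi₀
      have hstrict : ∑ i, (c * p i + q i * (1 - t))
          < ∑ i, (p i * Real.log (p i / q i) - p i + q i) :=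
        Finset.sum_lt_sum (fun i _ => key i) ⟨i₀, Finset.mem_univ _, keys i₀ hi₀⟩
      rw [hstar]; linarith

/-- the KL projection of a positive matrix Q onto the set of
nonnegative matrices with column sums at most b^u is the column rescaling
Q·diag(min(b^u/(Qᵀ·1), 1)). -/
theorem kl_projection_upper_bound_constraint
    (m n : ℕ) (hm : 0 < m) (hn : 0 < n)
    (Q : Matrix (Fin m) (Fin n) ℝ) (hQ : ∀ i j, 0 < Q i j)
    (bu : Fin n → ℝ) (hbu : ∀ j, 0 ≤ bu j)
    (S : Set (Matrix (Fin m) (Fin n) ℝ))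
    (hS : S = {P | (∀ i j, 0 ≤ P i j) ∧ (∀ j, ∑ i, P i j ≤ bu j)})
    (Pstar : Matrix (Fin m) (Fin n) ℝ)
    (hPstar : ∀ i j, Pstar i j = Q i j * min (bu j / (∑ k, Q k j)) 1) :
    Pstar ∈ S ∧
    IsMinOn (fun P : Matrix (Fin m) (Fin n) ℝ =>
        ∑ i, ∑ j, (P i j * Real.log (P i j / Q i j) - P i j + Q i j)) S Pstar ∧
    (∀ P ∈ S,
      IsMinOn (fun P : Matrix (Fin m) (Fin n) ℝ =>
        ∑ i, ∑ j, (P i j * Real.log (P i j / Q i j) - P i j + Q i j)) S P →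
      P = Pstar) := by
  subst hS
  have hs : ∀ j, 0 < ∑ k, Q k j := fun j =>
    Finset.sum_pos (fun i _ => hQ i j) ⟨⟨0, hm⟩, Finset.mem_univ _⟩
  have hswap : ∀ X : Matrix (Fin m) (Fin n) ℝ,
      (∑ i, ∑ j, (X i j * Real.log (X i j / Q i j) - X i j + Q i j))
        = ∑ j, ∑ i, (X i j * Real.log (X i j / Q i j) - X i j + Q i j) :=
    fun X => Finset.sum_comm
  have hmem : Pstar ∈ {P : Matrix (Fin m) (Fin n) ℝ |
      (∀ i j, 0 ≤ P i j) ∧ (∀ j, ∑ i, P i j ≤ bu j)} := by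
    constructor
    · intro i j
      rw [hPstar]
      exact mul_nonneg (hQ i j).le (le_min (div_nonneg (hbu j) (hs j).le) zero_le_one)
    · intro j
      have hsum : ∑ i, Pstar i j = (∑ i, Q i j) * min (bu j / ∑ k, Q k j) 1 := by
        simp_rw [hPstar]
        exact (Finset.sum_mul _ _ _).symm
      rw [hsum]
      calc (∑ i, Q i j) * min (bu j / ∑ k, Q k j) 1
          ≤ (∑ i, Q i j) * (bu j / ∑ k, Q k j) :=
            mul_le_mul_of_nonneg_left (min_le_left _ _) (hs j).le
        _ = bu j := by
            rw [mul_div_assoc']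
            exact mul_div_cancel_left₀ _ (hs j).ne'
  have hcol : ∀ P ∈ {P : Matrix (Fin m) (Fin n) ℝ |
      (∀ i j, 0 ≤ P i j) ∧ (∀ j, ∑ i, P i j ≤ bu j)}, ∀ j,
      (∑ i, (Pstar i j * Real.log (Pstar i j / Q i j) - Pstar i j + Q i j))
        ≤ (∑ i, (P i j * Real.log (P i j / Q i j) - P i j + Q i j)) ∧
      (∀ i₀, P i₀ j ≠ Pstar i₀ j →
        (∑ i, (Pstar i j * Real.log (Pstar i j / Q i j) - Pstar i j + Q i j))
          < ∑ i, (P i j * Real.log (P i j / Q i j) - P i j + Q i j)) := by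
    intro P hP j
    have h := col_lemma hm (fun i => Q i j) (fun i => P i j) (fun i => hQ i j)
      (bu j) (hbu j) (fun i => hP.1 i j) (hP.2 j) (min (bu j / ∑ k, Q k j) 1) rfl
    simp_rw [hPstar]
    refine ⟨h.1, fun i₀ hi₀ => h.2 i₀ ?_⟩
    simpa using hi₀
  refine ⟨hmem, ?_, ?_⟩
  · rw [isMinOn_iff]
    intro P hP
    rw [hswap, hswap]
    exact Finset.sum_le_sum fun j _ => (hcol P hP j).1
  · intro P hP hmin
    by_contra hne
    have hex : ∃ i j, P i j ≠ Pstar i j := by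
      by_contra h'
      push_neg at h'
      exact hne (by ext i j; exact h' i j)
    obtain ⟨i₀, j₀, hij⟩ := hex
    have hlt : (∑ j, ∑ i, (Pstar i j * Real.log (Pstar i j / Q i j) - Pstar i j + Q i j))
        < ∑ j, ∑ i, (P i j * Real.log (P i j / Q i j) - P i j + Q i j) :=
      Finset.sum_lt_sum (fun j _ => (hcol P hP j).1)
        ⟨j₀, Finset.mem_univ _, (hcol P hP j₀).2 i₀ hij⟩
    have hle := isMinOn_iff.mp hmin Pstar hmem
    rw [hswap, hswap] at hle
    linarith
end

section
/- Let m, n be positive integers, C ∈ ℝ^{m×n}, ε > 0, and K_{ij} = exp(-C_{ij}/ε). Let a ∈ ℝ^m have strictly positive entries, let b^d, b^u ∈ ℝ^n satisfy 0 ≤ b^d ≤ b^u entrywise, and suppose C(a,b^u,b^d) is nonempty. Then the minimizer P* of ⟨C,P⟩ - εH(P) over C(a,b^u,b^d) exists and is unique, and there exist vectors u ∈ ℝ^m with u > 0, q ∈ ℝ^n with q ≥ 1_n entrywise, and v ∈ ℝ^n with 0 ≤ v ≤ 1_n entrywise, such that P* = diag(u)·K·diag(q⊙v), i.e. P*_{ij}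 = u_i·K_{ij}·q_j·v_j for all i, j. -/
/-!
A minimizer exists because the coupling polytope is compact, and it is unique because
`x ↦ x (log x - 1)` is strictly convex.

For the scaling form, perturb the minimizer `P` along a `2 × 2` cycle
`E = (eᵢ - eᵢ') ⊗ (eⱼ - eⱼ')`, which changes no row or column sum. Convexity gives
`cost (P + t • E) - cost P ≤ t * slope t`, where `slope t` is the derivative of the cost along `E`
at `P + t • E`. If `P i j = 0` while `P i' j > 0` and `P i j' > 0`, then `slope t → -∞` as
`t → 0⁺` because of the term `log t`, contradicting minimality; as every row carries positive
mass, each column of `P` is therefore either zero or positive. On cycles with positive corners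
minimality forces `slope 0 = 0`. Together these make `P i j * exp (C i j / ε)` a rank-one matrix
`u i * s j` with `u > 0` and `s ≥ 0`.
-/

open Real Filter Topology Finset Matrix

theorem strictConvexOn_univ_pi_sum {ι : Type*} [Fintype ι] {E : ι → Type*}
    [∀ i, AddCommGroup (E i)] [∀ i, Module ℝ (E i)] {s : ∀ i, Set (E i)}
    {f : ∀ i, E i → ℝ} (hf : ∀ i, StrictConvexOn ℝ (s i) (f i)) :
    StrictConvexOn ℝ (Set.univ.pi s) fun x => ∑ i, f i (x i) := by
  refine ⟨convex_pi fun i _ => (hf i).1, fun x hx y hy hxy a b ha hb hab => ?_⟩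
  obtain ⟨i₀, hi₀⟩ := Function.ne_iff.1 hxy
  simp only [Pi.add_apply, Pi.smul_apply, smul_eq_mul, mul_sum, ← sum_add_distrib]
  exact sum_lt_sum (fun i _ => (hf i).convexOn.2 (hx i trivial) (hy i trivial) ha.le hb.le hab)
    ⟨i₀, mem_univ _, (hf i₀).2 (hx i₀ trivial) (hy i₀ trivial) hi₀ ha hb hab⟩

theorem eq_zero_of_eventually_mul_nonneg {f : ℝ → ℝ} (hf : ContinuousAt f 0)
    (h : ∀ᶠ t in 𝓝 0, 0 ≤ t * f t) : f 0 = 0 := by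
  by_contra hne
  rcases lt_or_gt_of_ne hne with hneg | hpos
  · obtain ⟨t, ht, hft, htf⟩ : ∃ t, 0 < t ∧ f t < 0 ∧ 0 ≤ t * f t :=
      ((eventually_mem_nhdsWithin (a := 0) (s := Set.Ioi 0)).and
        (nhdsWithin_le_nhds ((hf.eventually (gt_mem_nhds hneg)).and h))).exists
    nlinarith
  · obtain ⟨t, ht, hft, htf⟩ : ∃ t, t < 0 ∧ 0 < f t ∧ 0 ≤ t * f t :=
      ((eventually_mem_nhdsWithin (a := 0) (s := Set.Iio 0)).and
        (nhdsWithin_le_nhds ((hf.eventually (lt_mem_nhds hpos)).and h))).exists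
    nlinarith

theorem eventually_pos_add_mul {p : ℝ} (hp : 0 < p) (e : ℝ) :
    ∀ᶠ t in 𝓝 0, 0 < p + t * e := by
  have h : Tendsto (fun t : ℝ => p + t * e) (𝓝 0) (𝓝 p) :=
    (by fun_prop : Continuous fun t : ℝ => p + t * e).tendsto' 0 p (by simp)
  exact h.eventually (lt_mem_nhds hp)

theorem mul_log_sub_mul_log_le {x y : ℝ} (hx : 0 ≤ x) (hy : 0 < y) :
    x * log y - x * log x ≤ y - x := by
  rcases hx.eq_or_lt with rfl | hx
  · simpa using hy.le
  have h := log_le_sub_one_of_pos (div_pos hy hx)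
  rw [log_div hy.ne' hx.ne'] at h
  calc x * log y - x * log x = x * (log y - log x) := by ring
    _ ≤ x * (y / x - 1) := mul_le_mul_of_nonneg_left h hx.le
    _ = y - x := by field_simp

theorem exists_rankOne_of_mul_eq_mul {ι κ : Type*} {R : Matrix ι κ ℝ} (hR : ∀ i j, 0 ≤ R i j)
    (hrow : ∀ i, ∃ j, 0 < R i j) (hcross : ∀ i i' j j', R i j * R i' j' = R i j' * R i' j) :
    ∃ (u : ι → ℝ) (s : κ → ℝ), (∀ i, 0 < u i) ∧ (∀ j, 0 ≤ s j) ∧ ∀ i j, R i j = u i * s j := by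
  cases isEmpty_or_nonempty ι with
  | inl _ => exact ⟨isEmptyElim, 0, isEmptyElim, fun _ => le_rfl, isEmptyElim⟩
  | inr h =>
    obtain ⟨i₀⟩ := h
    obtain ⟨j₀, h₀⟩ := hrow i₀
    have hu : ∀ i, 0 < R i j₀ := fun i => by
      obtain ⟨j, hj⟩ := hrow i
      refine (hR i j₀).lt_of_ne fun h => ?_
      have := hcross i i₀ j j₀
      rw [← h, zero_mul] at this
      exact (mul_pos hj h₀).ne' this
    refine ⟨fun i => R i j₀, fun j => R i₀ j / R i₀ j₀, hu, fun j => div_nonneg (hR i₀ j) h₀.le,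
      fun i j => ?_⟩
    rw [mul_div_assoc', eq_div_iff h₀.ne', hcross i i₀ j j₀]

noncomputable def cellCost (c ε x : ℝ) : ℝ := c * x + ε * (x * (log x - 1))

theorem continuous_cellCost (c ε : ℝ) : Continuous (cellCost c ε) := by
  have h : Continuous fun x : ℝ => x * (log x - 1) :=
    (continuous_mul_log.sub continuous_id).congr fun x => by simp only [Pi.sub_apply, id]; ring
  exact (continuous_const.mul continuous_id).add (continuous_const.mul h)

theorem strictConvexOn_cellCost (c : ℝ) {ε : ℝ} (hε : 0 < ε) :
    StrictConvexOn ℝ (Set.Ici 0) (cellCost c ε) := by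
  refine ⟨convex_Ici 0, fun x hx y hy hxy a b ha hb hab => ?_⟩
  have h := mul_lt_mul_of_pos_left (strictConvexOn_mul_log.2 hx hy hxy ha hb hab) hε
  simp only [smul_eq_mul, cellCost] at h ⊢
  have hb' : b = 1 - a := by linarith
  subst hb'
  nlinarith

theorem cellCost_sub_le (c : ℝ) {ε x y : ℝ} (hε : 0 ≤ ε) (hx : 0 ≤ x) (hy : 0 < y) :
    cellCost c ε y - cellCost c ε x ≤ (y - x) * (c + ε * log y) := by
  have h := mul_le_mul_of_nonneg_left (mul_log_sub_mul_log_le hx hy) hε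
  simp only [cellCost]
  nlinarith

section Couplings

variable {ι κ : Type*} [Fintype ι] [Fintype κ]

noncomputable def matrixEntropy (P : Matrix ι κ ℝ) : ℝ :=
  -∑ i, ∑ j, P i j * (log (P i j) - 1)

noncomputable def entropicCost (C : Matrix ι κ ℝ) (ε : ℝ) (P : Matrix ι κ ℝ) : ℝ :=
  (∑ i, ∑ j, C i j * P i j) - ε * matrixEntropy P

def boundedCouplings (a : ι → ℝ) (bd bu : κ → ℝ) : Set (Matrix ι κ ℝ) :=
  {P | (∀ i j, 0 ≤ P i j) ∧ (∀ i, ∑ j, P i j = a i) ∧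
    (∀ j, bd j ≤ ∑ i, P i j) ∧ (∀ j, ∑ i, P i j ≤ bu j)}

theorem entropicCost_eq_sum (C : Matrix ι κ ℝ) (ε : ℝ) (P : Matrix ι κ ℝ) :
    entropicCost C ε P = ∑ i, ∑ j, cellCost (C i j) ε (P i j) := by
  simp only [entropicCost, matrixEntropy, cellCost, sum_add_distrib, mul_sum, mul_neg,
    sub_neg_eq_add]

theorem continuous_entropicCost (C : Matrix ι κ ℝ) (ε : ℝ) :
    Continuous (entropicCost C ε) := by
  simp only [funext (entropicCost_eq_sum C ε)]
  exact continuous_finsetSum _ fun i _ => continuous_finsetSum _ fun j _ =>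
    (continuous_cellCost _ _).comp (continuous_apply_apply i j)

theorem isCompact_boundedCouplings (a : ι → ℝ) (bd bu : κ → ℝ) :
    IsCompact (boundedCouplings a bd bu) := by
  have hclosed : IsClosed (boundedCouplings a bd bu) := by
    simp only [boundedCouplings, Set.ofPred_and, Set.ofPred_forall]
    refine (isClosed_iInter fun i => isClosed_iInter fun j => ?_).inter
      ((isClosed_iInter fun i => ?_).inter
        ((isClosed_iInter fun j => ?_).inter (isClosed_iInter fun j => ?_)))
    · exact isClosed_le (by fun_prop) (by fun_prop)
    · exact isClosed_eq (by fun_prop) (by fun_prop)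
    · exact isClosed_le (by fun_prop) (by fun_prop)
    · exact isClosed_le (by fun_prop) (by fun_prop)
  refine IsCompact.of_isClosed_subset
    (isCompact_univ_pi fun i => isCompact_univ_pi fun _ => isCompact_Icc (a := 0) (b := a i))
    hclosed ?_
  rintro P ⟨hP, hrow, -, -⟩ i - j -
  exact ⟨hP i j, hrow i ▸ single_le_sum (fun j _ => hP i j) (mem_univ j)⟩

theorem convex_boundedCouplings (a : ι → ℝ) (bd bu : κ → ℝ) :
    Convex ℝ (boundedCouplings a bd bu) := by
  rintro P ⟨hP, hrowP, hlowP, hupP⟩ Q ⟨hQ, hrowQ, hlowQ, hupQ⟩ s t hs ht hst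
  simp only [boundedCouplings, Set.mem_ofPred_eq, Matrix.add_apply, Matrix.smul_apply,
    smul_eq_mul, sum_add_distrib, ← mul_sum, hrowP, hrowQ]
  refine ⟨fun i j => add_nonneg (mul_nonneg hs (hP i j)) (mul_nonneg ht (hQ i j)),
    fun i => by rw [← add_mul, hst, one_mul], fun j => ?_, fun j => ?_⟩
  · calc bd j = s * bd j + t * bd j := by rw [← add_mul, hst, one_mul]
      _ ≤ _ := by gcongr; exacts [hlowP j, hlowQ j]
  · calc _ ≤ s * bu j + t * bu j := by gcongr; exacts [hupP j, hupQ j]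
      _ = bu j := by rw [← add_mul, hst, one_mul]

theorem exists_isMinOn_entropicCost (C : Matrix ι κ ℝ) (ε : ℝ) {a : ι → ℝ} {bd bu : κ → ℝ}
    (hne : (boundedCouplings a bd bu).Nonempty) :
    ∃ P ∈ boundedCouplings a bd bu, IsMinOn (entropicCost C ε) (boundedCouplings a bd bu) P :=
  (isCompact_boundedCouplings a bd bu).exists_isMinOn hne
    (continuous_entropicCost C ε).continuousOn

theorem strictConvexOn_entropicCost (C : Matrix ι κ ℝ) {ε : ℝ} (hε : 0 < ε) (a : ι → ℝ)
    (bd bu : κ → ℝ) : StrictConvexOn ℝ (boundedCouplings a bd bu) (entropicCost C ε) := by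
  have h := strictConvexOn_univ_pi_sum fun i =>
    strictConvexOn_univ_pi_sum fun j => strictConvexOn_cellCost (C i j) hε
  simp only [funext (entropicCost_eq_sum C ε)]
  exact h.subset (fun P hP i _ j _ => hP.1 i j) (convex_boundedCouplings a bd bu)

end Couplings

section FirstOrder

variable {ι κ : Type*} [Fintype ι] [Fintype κ] {C : Matrix ι κ ℝ} {ε : ℝ} {a : ι → ℝ}
  {bd bu : κ → ℝ} {P E : Matrix ι κ ℝ}

/-- The derivative of `t ↦ entropicCost C ε (P + t • E)` wherever `P + t • E` is positive on the
support of `E`. -/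
noncomputable def costSlope (C : Matrix ι κ ℝ) (ε : ℝ) (P E : Matrix ι κ ℝ) (t : ℝ) : ℝ :=
  ∑ i, ∑ j, E i j * (C i j + ε * log (P i j + t * E i j))

theorem entropicCost_add_smul_sub_le (hε : 0 ≤ ε) (hP : ∀ i j, 0 ≤ P i j) {t : ℝ}
    (ht : ∀ i j, E i j ≠ 0 → 0 < P i j + t * E i j) :
    entropicCost C ε (P + t • E) - entropicCost C ε P ≤ t * costSlope C ε P E t := by
  simp only [entropicCost_eq_sum, costSlope, mul_sum, ← sum_sub_distrib]
  gcongr with i _ j _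
  simp only [Matrix.add_apply, Matrix.smul_apply, smul_eq_mul]
  by_cases hE : E i j = 0
  · simp [hE]
  · calc _ ≤ (P i j + t * E i j - P i j) * (C i j + ε * log (P i j + t * E i j)) :=
          cellCost_sub_le (C i j) hε (hP i j) (ht i j hE)
      _ = _ := by ring

theorem add_smul_mem_boundedCouplings (hP : P ∈ boundedCouplings a bd bu)
    (hrow : ∀ i, ∑ j, E i j = 0) (hcol : ∀ j, ∑ i, E i j = 0) {t : ℝ}
    (hnn : ∀ i j, 0 ≤ P i j + t * E i j) : P + t • E ∈ boundedCouplings a bd bu := by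
  obtain ⟨-, hrowP, hlow, hup⟩ := hP
  have hrow' : ∀ i, ∑ j, (P + t • E) i j = ∑ j, P i j := fun i => by
    simp [sum_add_distrib, ← mul_sum, hrow]
  have hcol' : ∀ j, ∑ i, (P + t • E) i j = ∑ i, P i j := fun j => by
    simp [sum_add_distrib, ← mul_sum, hcol]
  exact ⟨hnn, fun i => (hrow' i).trans (hrowP i), fun j => (hcol' j).symm ▸ hlow j,
    fun j => (hcol' j).symm ▸ hup j⟩

variable (hP : P ∈ boundedCouplings a bd bu)
  (hmin : IsMinOn (entropicCost C ε) (boundedCouplings a bd bu) P)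
include hP hmin

theorem mul_costSlope_nonneg_of_isMinOn (hε : 0 ≤ ε) (hrow : ∀ i, ∑ j, E i j = 0)
    (hcol : ∀ j, ∑ i, E i j = 0) {t : ℝ} (ht : ∀ i j, E i j ≠ 0 → 0 < P i j + t * E i j) :
    0 ≤ t * costSlope C ε P E t := by
  have hnn : ∀ i j, 0 ≤ P i j + t * E i j := fun i j => by
    by_cases hE : E i j = 0
    · simpa [hE] using hP.1 i j
    · exact (ht i j hE).le
  have hle : entropicCost C ε P ≤ entropicCost C ε (P + t • E) :=
    hmin (add_smul_mem_boundedCouplings hP hrow hcol hnn)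
  linarith [entropicCost_add_smul_sub_le (C := C) hε hP.1 ht]

theorem costSlope_zero_eq_zero_of_isMinOn (hε : 0 ≤ ε) (hrow : ∀ i, ∑ j, E i j = 0)
    (hcol : ∀ j, ∑ i, E i j = 0) (hsupp : ∀ i j, E i j ≠ 0 → 0 < P i j) :
    costSlope C ε P E 0 = 0 := by
  refine eq_zero_of_eventually_mul_nonneg ?_ ?_
  · refine tendsto_finsetSum _ fun i _ => tendsto_finsetSum _ fun j _ => ?_
    by_cases hE : E i j = 0
    · simp only [hE, zero_mul]
      exact continuousAt_const
    · have := (hsupp i j hE).ne'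
      exact ContinuousAt.tendsto (by fun_prop (disch := simpa))
  · have hev : ∀ᶠ t in 𝓝 0, ∀ i j, E i j ≠ 0 → 0 < P i j + t * E i j :=
      eventually_all.2 fun i => eventually_all.2 fun j => by
        by_cases hE : E i j = 0
        · exact Eventually.of_forall fun t h => absurd hE h
        · exact (eventually_pos_add_mul (hsupp i j hE) _).mono fun t ht _ => ht
    exact hev.mono fun t ht => mul_costSlope_nonneg_of_isMinOn hP hmin hε hrow hcol ht

end FirstOrder

section Swap

variable {ι κ : Type*} [DecidableEq ι] [DecidableEq κ]

def swapMatrix (i i' : ι) (j j' : κ) : Matrix ι κ ℝ :=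
  vecMulVec (Pi.single i 1 - Pi.single i' 1) (Pi.single j 1 - Pi.single j' 1)

theorem sum_swapMatrix_mul [Fintype ι] [Fintype κ] (i i' : ι) (j j' : κ) (F : Matrix ι κ ℝ) :
    ∑ k, ∑ l, swapMatrix i i' j j' k l * F k l = F i j - F i j' - F i' j + F i' j' := by
  simp [swapMatrix, vecMulVec_apply, Pi.single_apply, sub_mul, mul_sub, sum_sub_distrib, ite_mul]
  ring

theorem swapMatrix_apply (i i' k : ι) (j j' l : κ) : swapMatrix i i' j j' k l =
    ((Pi.single i 1 - Pi.single i' 1 : ι → ℝ) k) * ((Pi.single j 1 - Pi.single j' 1 : κ → ℝ) l) :=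
  rfl

theorem sum_swapMatrix_row [Fintype κ] (i i' : ι) (j j' : κ) (k : ι) :
    ∑ l, swapMatrix i i' j j' k l = 0 := by
  simp [swapMatrix, vecMulVec_apply, ← mul_sum, sum_sub_distrib]

theorem sum_swapMatrix_col [Fintype ι] (i i' : ι) (j j' : κ) (l : κ) :
    ∑ k, swapMatrix i i' j j' k l = 0 := by
  simp [swapMatrix, vecMulVec_apply, ← sum_mul, sum_sub_distrib]

theorem mem_of_swapMatrix_ne_zero {i i' k : ι} {j j' l : κ} (h : swapMatrix i i' j j' k l ≠ 0) :
    (k = i ∨ k = i') ∧ (l = j ∨ l = j') := by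
  simp only [swapMatrix, vecMulVec_apply, Pi.sub_apply, Pi.single_apply] at h
  constructor <;> by_contra! hne <;> simp_all

theorem costSlope_swapMatrix [Fintype ι] [Fintype κ] (C P : Matrix ι κ ℝ) (ε t : ℝ) (i i' : ι)
    (j j' : κ) :
    costSlope C ε P (swapMatrix i i' j j') t =
      let G := fun k l => C k l + ε * log (P k l + t * swapMatrix i i' j j' k l)
      G i j - G i j' - G i' j + G i' j' :=
  sum_swapMatrix_mul i i' j j' _

end Swap

section Minimizer

variable {ι κ : Type*} [Fintype ι] [Fintype κ] [DecidableEq ι] [DecidableEq κ]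
  {C : Matrix ι κ ℝ} {ε : ℝ} {a : ι → ℝ} {bd bu : κ → ℝ} {P : Matrix ι κ ℝ}
  (hP : P ∈ boundedCouplings a bd bu)
  (hmin : IsMinOn (entropicCost C ε) (boundedCouplings a bd bu) P)
include hP hmin

theorem cycle_eq_of_isMinOn (hε : 0 ≤ ε) {i i' : ι} {j j' : κ} (h₁₁ : 0 < P i j)
    (h₁₂ : 0 < P i j') (h₂₁ : 0 < P i' j) (h₂₂ : 0 < P i' j') :
    C i j + ε * log (P i j) + (C i' j' + ε * log (P i' j')) =
      C i j' + ε * log (P i j') + (C i' j + ε * log (P i' j)) := by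
  have hsupp : ∀ k l, swapMatrix i i' j j' k l ≠ 0 → 0 < P k l := by
    intro k l hkl
    obtain ⟨rfl | rfl, rfl | rfl⟩ := mem_of_swapMatrix_ne_zero hkl <;> assumption
  have h := costSlope_zero_eq_zero_of_isMinOn hP hmin hε (sum_swapMatrix_row i i' j j')
    (sum_swapMatrix_col i i' j j') hsupp
  simp only [costSlope_swapMatrix, zero_mul, add_zero] at h
  linarith

theorem pos_of_pos_of_pos_of_isMinOn (hε : 0 < ε) {i i' : ι} {j j' : κ} (h₂₁ : 0 < P i' j)
    (h₁₂ : 0 < P i j') : 0 < P i j := by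
  by_contra h₀
  have h₁₁ : P i j = 0 := le_antisymm (not_lt.1 h₀) (hP.1 i j)
  have hii : i ≠ i' := by rintro rfl; exact h₀ h₂₁
  have hjj : j ≠ j' := by rintro rfl; exact h₀ h₁₂
  have hslope : ∀ t, costSlope C ε P (swapMatrix i i' j j') t =
      C i j + ε * log t - (C i j' + ε * log (P i j' - t)) - (C i' j + ε * log (P i' j - t)) +
        (C i' j' + ε * log (P i' j' + t)) := by
    intro t
    simp [costSlope_swapMatrix, swapMatrix_apply, hii, hii.symm, hjj, hjj.symm, h₁₁,
      sub_eq_add_neg]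
  -- the corner `(i', j')` may vanish, so its logarithm is only bounded above
  set B : ℝ → ℝ := fun t => C i j - (C i j' + ε * log (P i j' - t)) -
    (C i' j + ε * log (P i' j - t)) + (C i' j' + ε * (P i' j' + t))
  have hB : ContinuousAt B 0 := by fun_prop (disch := simp; positivity)
  have hlim : Tendsto (fun t => ε * log t + B t) (𝓝[>] 0) atBot :=
    (tendsto_log_nhdsGT_zero.const_mul_atBot hε).atBot_add
      (hB.tendsto.mono_left nhdsWithin_le_nhds)
  obtain ⟨t, ⟨ht, ht₁₂, ht₂₁⟩, hneg⟩ :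
      ∃ t, (0 < t ∧ t < P i j' ∧ t < P i' j) ∧ ε * log t + B t < 0 :=
    ((eventually_mem_nhdsWithin.and
      (nhdsWithin_le_nhds ((gt_mem_nhds h₁₂).and (gt_mem_nhds h₂₁)))).and
        (hlim.eventually_lt_atBot 0)).exists
  have hle : costSlope C ε P (swapMatrix i i' j j') t ≤ ε * log t + B t := by
    have := log_le_self (by linarith [hP.1 i' j'] : 0 ≤ P i' j' + t)
    have := mul_le_mul_of_nonneg_left this hε.le
    rw [hslope]
    linarith
  have hfeas :
      ∀ k l, swapMatrix i i' j j' k l ≠ 0 → 0 < P k l + t * swapMatrix i i' j j' k l := by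
    intro k l hkl
    obtain ⟨hk | hk, hl | hl⟩ := mem_of_swapMatrix_ne_zero hkl <;>
      simp [hk, hl, swapMatrix_apply, hii, hii.symm, hjj, hjj.symm] <;> linarith [hP.1 i' j']
  have := mul_costSlope_nonneg_of_isMinOn hP hmin hε.le (sum_swapMatrix_row i i' j j')
    (sum_swapMatrix_col i i' j j') hfeas
  nlinarith

theorem col_eq_zero_or_pos_of_isMinOn (hε : 0 < ε) (ha : ∀ i, 0 < a i) (j : κ) :
    (∀ i, P i j = 0) ∨ ∀ i, 0 < P i j := by
  by_cases h : ∃ i', 0 < P i' j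
  · obtain ⟨i', hi'⟩ := h
    refine Or.inr fun i => ?_
    obtain ⟨j', -, hj'⟩ := exists_lt_of_sum_lt (s := univ) (f := 0) (g := P i)
      (by simpa [hP.2.1 i] using ha i)
    exact pos_of_pos_of_pos_of_isMinOn hP hmin hε hi' hj'
  · simp only [not_exists, not_lt] at h
    exact Or.inl fun i => le_antisymm (h i) (hP.1 i j)

theorem exists_scaling_of_isMinOn (hε : 0 < ε) (ha : ∀ i, 0 < a i) :
    ∃ (u : ι → ℝ) (s : κ → ℝ), (∀ i, 0 < u i) ∧ (∀ j, 0 ≤ s j) ∧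
      ∀ i j, P i j = u i * exp (-C i j / ε) * s j := by
  set R : Matrix ι κ ℝ := fun i j => P i j * exp (C i j / ε)
  have hexp : ∀ i j, 0 < P i j → R i j = exp ((C i j + ε * log (P i j)) / ε) := by
    intro i j hij
    rw [add_div, mul_div_cancel_left₀ _ hε.ne', exp_add, exp_log hij, mul_comm]
  have hcross : ∀ i i' j j', R i j * R i' j' = R i j' * R i' j := by
    intro i i' j j'
    rcases col_eq_zero_or_pos_of_isMinOn hP hmin hε ha j with hj | hj
    · simp [R, hj]
    rcases col_eq_zero_or_pos_of_isMinOn hP hmin hε ha j' with hj' | hj'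
    · simp [R, hj']
    rw [hexp i j (hj i), hexp i' j' (hj' i'), hexp i j' (hj' i), hexp i' j (hj i'), ← exp_add,
      ← exp_add, ← add_div, ← add_div,
      cycle_eq_of_isMinOn hP hmin hε.le (hj i) (hj' i) (hj i') (hj' i')]
  have hrow : ∀ i, ∃ j, 0 < R i j := fun i => by
    obtain ⟨j, -, hj⟩ := exists_lt_of_sum_lt (s := univ) (f := 0) (g := P i)
      (by simpa [hP.2.1 i] using ha i)
    exact ⟨j, mul_pos hj (exp_pos _)⟩
  obtain ⟨u, s, hu, hs, hR⟩ :=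
    exists_rankOne_of_mul_eq_mul (fun i j => mul_nonneg (hP.1 i j) (exp_pos _).le) hrow hcross
  refine ⟨u, s, hu, hs, fun i j => ?_⟩
  calc P i j = R i j * exp (-C i j / ε) := by simp [R, mul_assoc, ← exp_add, neg_div]
    _ = u i * exp (-C i j / ε) * s j := by linear_combination exp (-C i j / ε) * hR i j

end Minimizer

theorem dbot_solution_property_general
    (m n : ℕ)
    (C : Matrix (Fin m) (Fin n) ℝ) (ε : ℝ) (hε : 0 < ε)
    (K : Matrix (Fin m) (Fin n) ℝ)
    (hK : ∀ i j, K i j = Real.exp (-(C i j) / ε))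
    (a : Fin m → ℝ) (ha : ∀ i, 0 < a i)
    (bd bu : Fin n → ℝ)
    (S : Set (Matrix (Fin m) (Fin n) ℝ))
    (hS : S = {P | (∀ i j, 0 ≤ P i j) ∧ (∀ i, ∑ j, P i j = a i) ∧
            (∀ j, bd j ≤ ∑ i, P i j) ∧ (∀ j, ∑ i, P i j ≤ bu j)})
    (hne : S.Nonempty) :
    ∃ Pstar : Matrix (Fin m) (Fin n) ℝ,
      Pstar ∈ S ∧
      IsMinOn (fun P : Matrix (Fin m) (Fin n) ℝ =>
          (∑ i, ∑ j, C i j * P i j) -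
            ε * (-(∑ i, ∑ j, P i j * (Real.log (P i j) - 1)))) S Pstar ∧
      (∀ P ∈ S,
        IsMinOn (fun P : Matrix (Fin m) (Fin n) ℝ =>
          (∑ i, ∑ j, C i j * P i j) -
            ε * (-(∑ i, ∑ j, P i j * (Real.log (P i j) - 1)))) S P → P = Pstar) ∧
      ∃ (u : Fin m → ℝ) (q v : Fin n → ℝ),
        (∀ i, 0 < u i) ∧ (∀ j, 1 ≤ q j) ∧ (∀ j, 0 ≤ v j ∧ v j ≤ 1) ∧
        ∀ i j, Pstar i j = u i * K i j * (q j * v j) := by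
  obtain rfl : S = boundedCouplings a bd bu := hS
  obtain ⟨P, hP, hmin⟩ := exists_isMinOn_entropicCost C ε hne
  refine ⟨P, hP, hmin, fun Q hQ hQmin =>
    (strictConvexOn_entropicCost C hε a bd bu).eq_of_isMinOn hQmin hmin hQ hP, ?_⟩
  obtain ⟨u, s, hu, hs, hus⟩ := exists_scaling_of_isMinOn hP hmin hε ha
  refine ⟨u, fun j => max (s j) 1, fun j => min (s j) 1, hu, fun j => le_max_right _ _,
    fun j => ⟨le_min (hs j) zero_le_one, min_le_right _ _⟩, fun i j => ?_⟩
  rw [hus, hK, max_mul_min, mul_one]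

/-- the entropic DB-OT problem has a unique minimizer over the
double-bounded coupling set, and it has the scaling form diag(u)·K·diag(q⊙v)
with u > 0, q ≥ 1 and 0 ≤ v ≤ 1. -/
theorem dbot_solution_property
    (m n : ℕ) (hm : 0 < m) (hn : 0 < n)
    (C : Matrix (Fin m) (Fin n) ℝ) (ε : ℝ) (hε : 0 < ε)
    (K : Matrix (Fin m) (Fin n) ℝ)
    (hK : ∀ i j, K i j = Real.exp (-(C i j) / ε))
    (a : Fin m → ℝ) (ha : ∀ i, 0 < a i)
    (bd bu : Fin n → ℝ) (hbd : ∀ j, 0 ≤ bd j) (hdu : ∀ j, bd j ≤ bu j)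
    (S : Set (Matrix (Fin m) (Fin n) ℝ))
    (hS : S = {P | (∀ i j, 0 ≤ P i j) ∧ (∀ i, ∑ j, P i j = a i) ∧
            (∀ j, bd j ≤ ∑ i, P i j) ∧ (∀ j, ∑ i, P i j ≤ bu j)})
    (hne : S.Nonempty) :
    ∃ Pstar : Matrix (Fin m) (Fin n) ℝ,
      Pstar ∈ S ∧
      IsMinOn (fun P : Matrix (Fin m) (Fin n) ℝ =>
          (∑ i, ∑ j, C i j * P i j) -
            ε * (-(∑ i, ∑ j, P i j * (Real.log (P i j) - 1)))) S Pstar ∧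
      (∀ P ∈ S,
        IsMinOn (fun P : Matrix (Fin m) (Fin n) ℝ =>
          (∑ i, ∑ j, C i j * P i j) -
            ε * (-(∑ i, ∑ j, P i j * (Real.log (P i j) - 1)))) S P → P = Pstar) ∧
      ∃ (u : Fin m → ℝ) (q v : Fin n → ℝ),
        (∀ i, 0 < u i) ∧ (∀ j, 1 ≤ q j) ∧ (∀ j, 0 ≤ v j ∧ v j ≤ 1) ∧
        ∀ i j, Pstar i j = u i * K i j * (q j * v j) :=
  dbot_solution_property_general m n C ε hε K hK a ha bd bu S hS hne
end

section
/- Let m, n be positive integers, C ∈ ℝ^{m×n}, ε > 0, and K_{ij} = exp(-C_{ij}/ε). Let a ∈ ℝ^m have strictly positive entries and b^d, b^u ∈ ℝ^n satisfy 0 ≤ b^d ≤ b^u entrywise. Suppose u ∈ ℝ^m with u > 0, q ∈ ℝ^n with q ≥ 1_n, and v ∈ ℝ^n with 0 < v ≤ 1_n are such that the matrix P = diag(u)·K·diag(q⊙v) belongs to C(a,b^u,b^d), and for every j the complementary slackness conditions hold: if q_j > 1 then (Pᵀ1_m)_j = b^d_j, and if v_j < 1 then (Pᵀ1_m)_j =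 b^u_j. Then P is the unique minimizer of ⟨C,P'⟩ - εH(P') over P' ∈ C(a,b^u,b^d). -/
open Real

lemma entLB_strict {s t : ℝ} (hs : 0 < s) (ht : 0 ≤ t) (hne : t ≠ s) :
    s * (Real.log s - 1) + Real.log s * (t - s) < t * (Real.log t - 1) := by
  rcases ht.eq_or_lt with h0 | h0
  · subst h0
    have : s * (Real.log s - 1) + Real.log s * ((0:ℝ) - s) = -s := by ring
    simp only [zero_mul]
    linarith
  · have hne' : s / t ≠ 1 := by
      intro h
      rw [div_eq_one_iff_eq h0.ne'] at h
      exact hne h.symm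
    have h := Real.log_lt_sub_one_of_pos (div_pos hs h0) hne'
    have h2 : t * Real.log (s / t) < t * (s / t - 1) :=
      mul_lt_mul_of_pos_left h h0
    rw [Real.log_div hs.ne' h0.ne'] at h2
    have h3 : t * (s / t - 1) = s - t := by field_simp
    nlinarith [h2]

lemma entLB {s t : ℝ} (hs : 0 < s) (ht : 0 ≤ t) :
    s * (Real.log s - 1) + Real.log s * (t - s) ≤ t * (Real.log t - 1) := by
  rcases eq_or_ne t s with h | h
  · subst h; apply le_of_eq; ring
  · exact (entLB_strict hs ht h).le

lemma ptwise {ε c s t : ℝ} (hε : 0 < ε) (hs : 0 < s) (ht : 0 ≤ t) :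
    c * s + ε * (s * (Real.log s - 1)) + (c + ε * Real.log s) * (t - s) ≤
      c * t + ε * (t * (Real.log t - 1)) := by
  have h := mul_le_mul_of_nonneg_left (entLB hs ht) hε.le
  nlinarith [h]

lemma ptwise_strict {ε c s t : ℝ} (hε : 0 < ε) (hs : 0 < s) (ht : 0 ≤ t) (hne : t ≠ s) :
    c * s + ε * (s * (Real.log s - 1)) + (c + ε * Real.log s) * (t - s) <
      c * t + ε * (t * (Real.log t - 1)) := by
  have h := mul_lt_mul_of_pos_left (entLB_strict hs ht hne) hε
  nlinarith [h]

/-- a feasible matrix of the scaling form diag(u)·K·diag(q⊙v) with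
u > 0, q ≥ 1, 0 < v ≤ 1 satisfying the complementary slackness conditions is
the unique minimizer of the entropic DB-OT objective. -/
theorem dbot_scaling_form_is_optimal
    (m n : ℕ) (hm : 0 < m) (hn : 0 < n)
    (C : Matrix (Fin m) (Fin n) ℝ) (ε : ℝ) (hε : 0 < ε)
    (K : Matrix (Fin m) (Fin n) ℝ)
    (hK : ∀ i j, K i j = Real.exp (-(C i j) / ε))
    (a : Fin m → ℝ) (ha : ∀ i, 0 < a i)
    (bd bu : Fin n → ℝ) (hbd : ∀ j, 0 ≤ bd j) (hdu : ∀ j, bd j ≤ bu j)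
    (S : Set (Matrix (Fin m) (Fin n) ℝ))
    (hS : S = {P | (∀ i j, 0 ≤ P i j) ∧ (∀ i, ∑ j, P i j = a i) ∧
            (∀ j, bd j ≤ ∑ i, P i j) ∧ (∀ j, ∑ i, P i j ≤ bu j)})
    (u : Fin m → ℝ) (hu : ∀ i, 0 < u i)
    (q : Fin n → ℝ) (hq : ∀ j, 1 ≤ q j)
    (v : Fin n → ℝ) (hv : ∀ j, 0 < v j ∧ v j ≤ 1)
    (P : Matrix (Fin m) (Fin n) ℝ)
    (hP : ∀ i j, P i j = u i * K i j * (q j * v j))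
    (hPS : P ∈ S)
    (hslackq : ∀ j, 1 < q j → ∑ i, P i j = bd j)
    (hslackv : ∀ j, v j < 1 → ∑ i, P i j = bu j) :
    IsMinOn (fun P' : Matrix (Fin m) (Fin n) ℝ =>
        (∑ i, ∑ j, C i j * P' i j) -
          ε * (-(∑ i, ∑ j, P' i j * (Real.log (P' i j) - 1)))) S P ∧
    (∀ P' ∈ S,
      IsMinOn (fun P' : Matrix (Fin m) (Fin n) ℝ =>
        (∑ i, ∑ j, C i j * P' i j) -
          ε * (-(∑ i, ∑ j, P' i j * (Real.log (P' i j) - 1)))) S P' → P' = P) := by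
  have hPm := hPS
  rw [hS] at hPm
  obtain ⟨hPnn, hProw, hPd0, hPu0⟩ := hPm
  have hPpos : ∀ i j, 0 < P i j := by
    intro i j
    rw [hP i j, hK i j]
    have h1 := Real.exp_pos (-(C i j) / ε)
    have hqj : (0:ℝ) < q j := lt_of_lt_of_le one_pos (hq j)
    exact mul_pos (mul_pos (hu i) h1) (mul_pos hqj (hv j).1)
  have hL : ∀ i j, C i j + ε * Real.log (P i j)
      = ε * Real.log (u i) + ε * (Real.log (q j) + Real.log (v j)) := by
    intro i j
    have hqj : (0:ℝ) < q j := lt_of_lt_of_le one_pos (hq j)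
    rw [hP i j, hK i j]
    have hqv : (0:ℝ) < q j * v j := mul_pos hqj (hv j).1
    rw [Real.log_mul (mul_pos (hu i) (Real.exp_pos _)).ne' hqv.ne',
      Real.log_mul (hu i).ne' (Real.exp_ne_zero _), Real.log_exp,
      Real.log_mul hqj.ne' (hv j).1.ne']
    field_simp
    ring
  set F : Matrix (Fin m) (Fin n) ℝ → ℝ := fun Q =>
    (∑ i, ∑ j, C i j * Q i j) - ε * (-(∑ i, ∑ j, Q i j * (Real.log (Q i j) - 1))) with hF
  have hFeq : ∀ Q : Matrix (Fin m) (Fin n) ℝ, F Q = ∑ p : Fin m × Fin n,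
      (C p.1 p.2 * Q p.1 p.2 + ε * (Q p.1 p.2 * (Real.log (Q p.1 p.2) - 1))) := by
    intro Q
    rw [hF]
    simp only
    rw [mul_neg, sub_neg_eq_add, Finset.mul_sum, ← Finset.sum_add_distrib,
      Fintype.sum_prod_type]
    refine Finset.sum_congr rfl fun i _ => ?_
    rw [Finset.mul_sum, ← Finset.sum_add_distrib]
  have key : ∀ P' ∈ S, F P ≤ F P' ∧ (P' ≠ P → F P < F P') := by
    intro P' hP'
    rw [hS] at hP'
    obtain ⟨hnn, hrow, hd, hub⟩ := hP'
    -- linear term identity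
    have hlin : (∑ p : Fin m × Fin n,
        (C p.1 p.2 + ε * Real.log (P p.1 p.2)) * (P' p.1 p.2 - P p.1 p.2))
        = ε * ∑ j, (Real.log (q j) + Real.log (v j)) * ((∑ i, P' i j) - ∑ i, P i j) := by
      rw [Fintype.sum_prod_type]
      have he : ∀ i j, (C i j + ε * Real.log (P i j)) * (P' i j - P i j)
          = ε * Real.log (u i) * (P' i j - P i j)
            + ε * ((Real.log (q j) + Real.log (v j)) * (P' i j - P i j)) := by
        intro i j; rw [hL i j]; ring
      simp only [he, Finset.sum_add_distrib]
      have h1 : ∀ i, ∑ j, ε * Real.log (u i) * (P' i j - P i j) = 0 := by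
        intro i
        rw [← Finset.mul_sum, Finset.sum_sub_distrib, hrow i, hProw i, sub_self, mul_zero]
      have h2 : ∀ j, ∑ i, ε * ((Real.log (q j) + Real.log (v j)) * (P' i j - P i j))
          = ε * ((Real.log (q j) + Real.log (v j)) * ((∑ i, P' i j) - ∑ i, P i j)) := by
        intro j
        rw [← Finset.mul_sum, ← Finset.mul_sum, Finset.sum_sub_distrib]
      rw [Finset.sum_comm (f := fun i j => ε * ((Real.log (q j) + Real.log (v j)) * (P' i j - P i j)))]
      simp only [h1, h2, Finset.sum_const_zero, zero_add, ← Finset.mul_sum]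
    -- nonnegativity of the linear term
    have hnonneg : 0 ≤ ∑ j, (Real.log (q j) + Real.log (v j)) * ((∑ i, P' i j) - ∑ i, P i j) := by
      apply Finset.sum_nonneg
      intro j _
      have hsplit : (Real.log (q j) + Real.log (v j)) * ((∑ i, P' i j) - ∑ i, P i j)
          = Real.log (q j) * ((∑ i, P' i j) - ∑ i, P i j)
            + Real.log (v j) * ((∑ i, P' i j) - ∑ i, P i j) := by ring
      rw [hsplit]
      apply add_nonneg
      · rcases eq_or_lt_of_le (hq j) with h | h
        · rw [← h, Real.log_one, zero_mul]
        · apply mul_nonneg (Real.log_nonneg (hq j))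
          rw [hslackq j h]
          have := hd j
          linarith
      · rcases eq_or_lt_of_le (hv j).2 with h | h
        · rw [h, Real.log_one, zero_mul]
        · have hlog : Real.log (v j) ≤ 0 := Real.log_nonpos (hv j).1.le (hv j).2
          have hle : (∑ i, P' i j) - ∑ i, P i j ≤ 0 := by
            rw [hslackv j h]
            have := hub j
            linarith
          nlinarith [mul_nonneg (neg_nonneg.2 hlog) (neg_nonneg.2 hle)]
    -- sum inequality
    have hsplitsum : (∑ p : Fin m × Fin n,
        (C p.1 p.2 * P p.1 p.2 + ε * (P p.1 p.2 * (Real.log (P p.1 p.2) - 1))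
          + (C p.1 p.2 + ε * Real.log (P p.1 p.2)) * (P' p.1 p.2 - P p.1 p.2)))
        = F P + ∑ p : Fin m × Fin n,
            (C p.1 p.2 + ε * Real.log (P p.1 p.2)) * (P' p.1 p.2 - P p.1 p.2) := by
      rw [Finset.sum_add_distrib, hFeq P]
    have hεnn : 0 ≤ ε * ∑ j, (Real.log (q j) + Real.log (v j)) * ((∑ i, P' i j) - ∑ i, P i j) :=
      mul_nonneg hε.le hnonneg
    constructor
    · have hsle : (∑ p : Fin m × Fin n,
          (C p.1 p.2 * P p.1 p.2 + ε * (P p.1 p.2 * (Real.log (P p.1 p.2) - 1))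
            + (C p.1 p.2 + ε * Real.log (P p.1 p.2)) * (P' p.1 p.2 - P p.1 p.2)))
          ≤ F P' := by
        rw [hFeq P']
        exact Finset.sum_le_sum fun p _ => ptwise hε (hPpos p.1 p.2) (hnn p.1 p.2)
      rw [hsplitsum, hlin] at hsle
      linarith
    · intro hne
      have hex : ∃ p : Fin m × Fin n, P' p.1 p.2 ≠ P p.1 p.2 := by
        by_contra h
        push_neg at h
        exact hne (by ext i j; exact h (i, j))
      obtain ⟨p0, hp0⟩ := hex
      have hslt : (∑ p : Fin m × Fin n,
          (C p.1 p.2 * P p.1 p.2 + ε * (P p.1 p.2 * (Real.log (P p.1 p.2) - 1))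
            + (C p.1 p.2 + ε * Real.log (P p.1 p.2)) * (P' p.1 p.2 - P p.1 p.2)))
          < F P' := by
        rw [hFeq P']
        exact Finset.sum_lt_sum (fun p _ => ptwise hε (hPpos p.1 p.2) (hnn p.1 p.2))
          ⟨p0, Finset.mem_univ _, ptwise_strict hε (hPpos p0.1 p0.2) (hnn p0.1 p0.2) hp0⟩
      rw [hsplitsum, hlin] at hslt
      linarith
  constructor
  · exact isMinOn_iff.mpr fun Q hQ => (key Q hQ).1
  · intro P' hP' hmin
    by_contra hne
    have h1 := (key P' hP').2 hne
    have h2 := isMinOn_iff.mp hmin P hPS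
    exact absurd h2 (not_le.mpr h1)
end

section
/- Let m, n be positive integers, C ∈ ℝ^{m×n}, ε > 0, and K_{ij} = exp(-C_{ij}/ε). Let a ∈ ℝ^m have strictly positive entries and b^d, b^u ∈ ℝ^n satisfy 0 ≤ b^d ≤ b^u entrywise. Then weak duality holds: for every P ∈ C(a,b^u,b^d) and every f ∈ ℝ^m, g ∈ ℝ^n with g ≥ 0 entrywise, and h ∈ ℝ^n with h ≤ 0 entrywise, one has ⟨f,a⟩ + ⟨g,b^d⟩ + ⟨h,b^u⟩ - ε·Σ_{ij} exp(f_i/ε)·K_{ij}·exp((g_j+h_j)/ε) ≤ ⟨C,P⟩ - εH(P). -/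
open Real

lemma dbot_key (p x : ℝ) (hp : 0 ≤ p) :
    p * x - Real.exp x ≤ p * Real.log p - p := by
  rcases hp.eq_or_lt with h | h
  · simp [← h]
    positivity
  · have h1 : x - Real.log p + 1 ≤ Real.exp (x - Real.log p) :=
      Real.add_one_le_exp _
    have h2 : Real.exp x = p * Real.exp (x - Real.log p) := by
      rw [Real.exp_sub, Real.exp_log h]
      field_simp
    nlinarith [mul_le_mul_of_nonneg_left h1 h.le]

lemma dbot_key2 (ε : ℝ) (hε : 0 < ε) (p t : ℝ) (hp : 0 ≤ p) :
    p * t - ε * Real.exp (t / ε) ≤ ε * (p * Real.log p - p) := by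
  have h := mul_le_mul_of_nonneg_left (dbot_key p (t / ε) hp) hε.le
  have ht : ε * (p * (t / ε)) = p * t := by
    field_simp
  linarith

/-- weak duality for entropic DB-OT — every dual value with
g ≥ 0 and h ≤ 0 is at most every primal value on the double-bounded coupling
set. -/
theorem dbot_weak_duality
    (m n : ℕ) (hm : 0 < m) (hn : 0 < n)
    (C : Matrix (Fin m) (Fin n) ℝ) (ε : ℝ) (hε : 0 < ε)
    (K : Matrix (Fin m) (Fin n) ℝ)
    (hK : ∀ i j, K i j = Real.exp (-(C i j) / ε))
    (a : Fin m → ℝ) (ha : ∀ i, 0 < a i)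
    (bd bu : Fin n → ℝ) (hbd : ∀ j, 0 ≤ bd j) (hdu : ∀ j, bd j ≤ bu j)
    (P : Matrix (Fin m) (Fin n) ℝ)
    (hPnn : ∀ i j, 0 ≤ P i j)
    (hProw : ∀ i, ∑ j, P i j = a i)
    (hPcold : ∀ j, bd j ≤ ∑ i, P i j)
    (hPcolu : ∀ j, ∑ i, P i j ≤ bu j)
    (f : Fin m → ℝ) (g h : Fin n → ℝ)
    (hg : ∀ j, 0 ≤ g j) (hh : ∀ j, h j ≤ 0) :
    (∑ i, f i * a i) + (∑ j, g j * bd j) + (∑ j, h j * bu j)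
        - ε * ∑ i, ∑ j, Real.exp (f i / ε) * K i j * Real.exp ((g j + h j) / ε)
      ≤ (∑ i, ∑ j, C i j * P i j) -
          ε * (-(∑ i, ∑ j, P i j * (Real.log (P i j) - 1))) := by
  have h1 : ∑ i, f i * a i = ∑ i, ∑ j, f i * P i j := by
    simp [← hProw, Finset.mul_sum]
  have h2 : ∑ j, g j * bd j ≤ ∑ j, ∑ i, g j * P i j :=
    Finset.sum_le_sum fun j _ => by
      rw [← Finset.mul_sum]
      exact mul_le_mul_of_nonneg_left (hPcold j) (hg j)
  have h3 : ∑ j, h j * bu j ≤ ∑ j, ∑ i, h j * P i j :=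
    Finset.sum_le_sum fun j _ => by
      rw [← Finset.mul_sum]
      exact mul_le_mul_of_nonpos_left (hPcolu j) (hh j)
  have h4 : ∑ i, ∑ j, ((f i + g j + h j) * P i j -
        ε * (Real.exp (f i / ε) * K i j * Real.exp ((g j + h j) / ε)))
      ≤ ∑ i, ∑ j, (C i j * P i j + ε * (P i j * (Real.log (P i j) - 1))) := by
    refine Finset.sum_le_sum fun i _ => Finset.sum_le_sum fun j _ => ?_
    have hE : Real.exp (f i / ε) * K i j * Real.exp ((g j + h j) / ε)
        = Real.exp ((f i + g j + h j - C i j) / ε) := by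
      rw [hK, ← Real.exp_add, ← Real.exp_add]
      ring_nf
    rw [hE]
    have := dbot_key2 ε hε (P i j) (f i + g j + h j - C i j) (hPnn i j)
    nlinarith [this]
  have e1 : ∑ i, ∑ j, ((f i + g j + h j) * P i j -
        ε * (Real.exp (f i / ε) * K i j * Real.exp ((g j + h j) / ε)))
      = (∑ i, ∑ j, f i * P i j) + (∑ j, ∑ i, g j * P i j)
        + (∑ j, ∑ i, h j * P i j)
        - ε * ∑ i, ∑ j, Real.exp (f i / ε) * K i j * Real.exp ((g j + h j) / ε) := by
    rw [Finset.sum_comm (f := fun j i => g j * P i j),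
        Finset.sum_comm (f := fun j i => h j * P i j)]
    simp [Finset.sum_sub_distrib, Finset.sum_add_distrib, Finset.mul_sum, add_mul]
  have e2 : ∑ i, ∑ j, (C i j * P i j + ε * (P i j * (Real.log (P i j) - 1)))
      = (∑ i, ∑ j, C i j * P i j) + ε * ∑ i, ∑ j, P i j * (Real.log (P i j) - 1) := by
    simp [Finset.sum_add_distrib, Finset.mul_sum]
  rw [e1, e2] at h4
  linarith
end

section
/- Let m, n be positive integers, ε > 0, K ∈ ℝ^{m×n} with strictly positive entries, a ∈ ℝ^m with strictly positive entries, b^d, b^u ∈ ℝ^n, and fix g, h ∈ ℝ^n. Then the function f ↦ ⟨f,a⟩ + ⟨g,b^d⟩ + ⟨h,b^u⟩ - ε·Σ_{ij} exp(f_i/ε)·K_{ij}·exp((g_j+h_j)/ε) on ℝ^m has a unique maximizer, given coordinatewise by f*_i = ε·log a_i - ε·log( Σ_j K_{ij}·exp((g_j+h_j)/ε) ). -/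
/-!
The functional separates over the coordinates of `f`: up to a constant it is
`∑ i, (f i * a i - ε * exp (f i / ε) * S i)` with `S i = ∑ j, K i j * exp ((g j + h j) / ε) > 0`.
Each summand is maximized exactly where `exp (t / ε) * S i = a i`; writing `t = t₀ + ε x` there,
its deficit from the maximum is `ε a (exp x - 1 - x)`, which is positive for `x ≠ 0`.
-/

open Real Finset

theorem isMaxOn_univ_and_eq_of_lt {α β : Type*} [Preorder β] {F : α → β} {x₀ : α}
    (hF : ∀ x, x ≠ x₀ → F x < F x₀) :
    IsMaxOn F Set.univ x₀ ∧ ∀ x, IsMaxOn F Set.univ x → x = x₀ := by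
  refine ⟨fun x _ => ?_, fun x hx => ?_⟩
  · rcases eq_or_ne x x₀ with rfl | hne
    exacts [le_rfl, (hF x hne).le]
  · by_contra hne
    exact (hF x hne).not_ge (hx (Set.mem_univ x₀))

theorem sum_apply_lt_sum_apply_of_ne {ι β M : Type*} [Fintype ι] [AddCommMonoid M] [PartialOrder M]
    [IsOrderedCancelAddMonoid M] {φ : ι → β → M} {x₀ : ι → β}
    (hφ : ∀ i t, t ≠ x₀ i → φ i t < φ i (x₀ i)) {x : ι → β} (hx : x ≠ x₀) :
    ∑ i, φ i (x i) < ∑ i, φ i (x₀ i) := by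
  obtain ⟨i₀, hi₀⟩ := Function.ne_iff.mp hx
  refine sum_lt_sum (fun i _ => ?_) ⟨i₀, mem_univ i₀, hφ i₀ _ hi₀⟩
  rcases eq_or_ne (x i) (x₀ i) with hi | hi
  exacts [(congrArg (φ i) hi).le, (hφ i _ hi).le]

theorem exp_div_mul_eq_of_eq_mul_log_sub {ε a S t₀ : ℝ} (hε : 0 < ε) (ha : 0 < a) (hS : 0 < S)
    (ht₀ : t₀ = ε * log a - ε * log S) :
    exp (t₀ / ε) * S = a := by
  have : t₀ / ε = log (a / S) := by
    rw [ht₀, log_div ha.ne' hS.ne']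
    field_simp
  rw [this, exp_log (div_pos ha hS), div_mul_cancel₀ a hS.ne']

theorem mul_sub_exp_mul_lt_of_ne {ε a S t t₀ : ℝ} (hε : 0 < ε) (ha : 0 < a)
    (ht₀ : exp (t₀ / ε) * S = a) (ht : t ≠ t₀) :
    t * a - ε * (exp (t / ε) * S) < t₀ * a - ε * (exp (t₀ / ε) * S) := by
  obtain ⟨x, rfl⟩ : ∃ x, t = t₀ + ε * x := ⟨(t - t₀) / ε, by field_simp; ring⟩
  have hx : x ≠ 0 := by rintro rfl; simp at ht
  have hexp : exp ((t₀ + ε * x) / ε) * S = exp x * a := by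
    rw [← ht₀, add_div, mul_div_cancel_left₀ x hε.ne', exp_add]
    ring
  have hdeficit := mul_lt_mul_of_pos_left (add_one_lt_exp hx) (mul_pos hε ha)
  rw [hexp, ht₀]
  nlinarith

theorem dbot_dual_f_update_general
    (m n : ℕ) (hn : 0 < n)
    (ε : ℝ) (hε : 0 < ε)
    (K : Matrix (Fin m) (Fin n) ℝ) (hK : ∀ i j, 0 < K i j)
    (a : Fin m → ℝ) (ha : ∀ i, 0 < a i)
    (bd bu : Fin n → ℝ) (g h : Fin n → ℝ)
    (L : (Fin m → ℝ) → ℝ)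
    (hL : ∀ f : Fin m → ℝ,
      L f = (∑ i, f i * a i) + (∑ j, g j * bd j) + (∑ j, h j * bu j)
        - ε * ∑ i, ∑ j, Real.exp (f i / ε) * K i j * Real.exp ((g j + h j) / ε))
    (fstar : Fin m → ℝ)
    (hfstar : ∀ i, fstar i = ε * Real.log (a i)
        - ε * Real.log (∑ j, K i j * Real.exp ((g j + h j) / ε))) :
    IsMaxOn L Set.univ fstar ∧
    (∀ f : Fin m → ℝ, IsMaxOn L Set.univ f → f = fstar) := by
  set S : Fin m → ℝ := fun i => ∑ j, K i j * exp ((g j + h j) / ε)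
  have hS : ∀ i, 0 < S i := fun i =>
    sum_pos (fun j _ => mul_pos (hK i j) (exp_pos _)) (univ_nonempty_iff.mpr ⟨⟨0, hn⟩⟩)
  have hL_sep : ∀ f, L f = ∑ i, (f i * a i - ε * (exp (f i / ε) * S i))
      + ((∑ j, g j * bd j) + ∑ j, h j * bu j) := by
    intro f
    simp only [hL, S, mul_sum, sum_sub_distrib, mul_assoc]
    ring
  refine isMaxOn_univ_and_eq_of_lt fun f hf => ?_
  rw [hL_sep, hL_sep]
  gcongr ?_ + _
  exact sum_apply_lt_sum_apply_of_ne (φ := fun i t => t * a i - ε * (exp (t / ε) * S i))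
    (fun i t ht => mul_sub_exp_mul_lt_of_ne hε (ha i)
      (exp_div_mul_eq_of_eq_mul_log_sub hε (ha i) (hS i) (hfstar i)) ht) hf

/-- for fixed g, h, the dual functional has a unique maximizer in
f, given by f*_i = ε·log a_i - ε·log(Σ_j K_ij·exp((g_j+h_j)/ε)). -/
theorem dbot_dual_f_update
    (m n : ℕ) (hm : 0 < m) (hn : 0 < n)
    (ε : ℝ) (hε : 0 < ε)
    (K : Matrix (Fin m) (Fin n) ℝ) (hK : ∀ i j, 0 < K i j)
    (a : Fin m → ℝ) (ha : ∀ i, 0 < a i)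
    (bd bu : Fin n → ℝ) (g h : Fin n → ℝ)
    (L : (Fin m → ℝ) → ℝ)
    (hL : ∀ f : Fin m → ℝ,
      L f = (∑ i, f i * a i) + (∑ j, g j * bd j) + (∑ j, h j * bu j)
        - ε * ∑ i, ∑ j, Real.exp (f i / ε) * K i j * Real.exp ((g j + h j) / ε))
    (fstar : Fin m → ℝ)
    (hfstar : ∀ i, fstar i = ε * Real.log (a i)
        - ε * Real.log (∑ j, K i j * Real.exp ((g j + h j) / ε))) :
    IsMaxOn L Set.univ fstar ∧
    (∀ f : Fin m → ℝ, IsMaxOn L Set.univ f → f = fstar) :=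
  dbot_dual_f_update_general m n hn ε hε K hK a ha bd bu g h L hL fstar hfstar
end

section
/- Let m, n be positive integers, ε > 0, K ∈ ℝ^{m×n} with strictly positive entries, a ∈ ℝ^m, and b^d, b^u ∈ ℝ^n with strictly positive entries. Fix f ∈ ℝ^m and write s_j = Σ_i K_{ij}·exp(f_i/ε). Then: (i) for fixed h ∈ ℝ^n, the unique maximizer over {g ∈ ℝ^n : g ≥ 0 entrywise} of g ↦ ⟨g,b^d⟩ - ε·Σ_j exp((g_j+h_j)/ε)·s_j is g*_j = max( ε·log b^d_j - ε·log s_j - h_j, 0 ); and (ii) for fixed g ∈ ℝ^n, the unique maximizer over {h ∈ ℝ^n : h ≤ 0 entrywise} of h ↦ ⟨h,b^u⟩ - ε·Σ_j exp((g_j+h_j)/ε)·s_j is h*_j = min( ε·log b^u_j - ε·log s_j - g_j, 0 ). -/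
open Real

lemma dbot_scalar_g_lt (ε b s h t ts : ℝ) (hε : 0 < ε) (hb : 0 < b) (hs : 0 < s)
    (hts : ts = max (ε * Real.log b - ε * Real.log s - h) 0)
    (ht : 0 ≤ t) (hne : t ≠ ts) :
    t * b - ε * (Real.exp ((t + h) / ε) * s) <
      ts * b - ε * (Real.exp ((ts + h) / ε) * s) := by
  set E := Real.exp ((ts + h) / ε) with hE
  have hEpos : 0 < E := Real.exp_pos _
  have hu : (t - ts) / ε ≠ 0 := by
    intro h0
    exact hne (by field_simp at h0; linarith)
  have key : Real.exp ((t + h) / ε) > E * ((t - ts) / ε + 1) := by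
    have : Real.exp ((t + h) / ε) = E * Real.exp ((t - ts) / ε) := by
      rw [hE, ← Real.exp_add]; ring_nf
    rw [this]
    exact mul_lt_mul_of_pos_left (Real.add_one_lt_exp hu) hEpos
  have hprod : (t - ts) * (b - E * s) ≤ 0 := by
    rcases le_or_gt 0 (ε * Real.log b - ε * Real.log s - h) with hc | hc
    · have hts' : ts = ε * Real.log b - ε * Real.log s - h := by
        rw [hts, max_eq_left hc]
      have : E = b / s := by
        rw [hE, hts']
        have : (ε * Real.log b - ε * Real.log s - h + h) / ε = Real.log b - Real.log s := by
          field_simp; ring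
        rw [this, ← Real.log_div hb.ne' hs.ne', Real.exp_log (div_pos hb hs)]
      rw [this]
      have : b / s * s = b := by field_simp
      rw [this]; ring_nf; simp
    · have hts' : ts = 0 := by rw [hts, max_eq_right hc.le]
      have hbE : b < E * s := by
        have h1 : Real.log b - Real.log s < h / ε := by
          rw [lt_div_iff₀ hε]
          nlinarith [hc]
        have h2 : b / s < Real.exp (h / ε) := by
          calc b / s = Real.exp (Real.log b - Real.log s) := by
                rw [← Real.log_div hb.ne' hs.ne', Real.exp_log (div_pos hb hs)]
            _ < Real.exp (h / ε) := Real.exp_lt_exp.mpr h1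
        have : E = Real.exp (h / ε) := by rw [hE, hts']; ring_nf
        rw [this]
        calc b = b / s * s := by field_simp
          _ < Real.exp (h / ε) * s := by exact mul_lt_mul_of_pos_right h2 hs
      have : 0 ≤ t - ts := by rw [hts']; linarith
      nlinarith
  have hmul : ε * (E * s * ((t - ts) / ε + 1)) < ε * (Real.exp ((t + h) / ε) * s) := by
    have := mul_lt_mul_of_pos_right key hs
    have := mul_lt_mul_of_pos_left this hε
    linarith [this]
  have expand : ε * (E * s * ((t - ts) / ε + 1)) = E * s * (t - ts) + ε * (E * s) := by
    field_simp
  nlinarith [hmul, hprod]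

lemma dbot_scalar_h_lt (ε b s g t ts : ℝ) (hε : 0 < ε) (hb : 0 < b) (hs : 0 < s)
    (hts : ts = min (ε * Real.log b - ε * Real.log s - g) 0)
    (ht : t ≤ 0) (hne : t ≠ ts) :
    t * b - ε * (Real.exp ((g + t) / ε) * s) <
      ts * b - ε * (Real.exp ((g + ts) / ε) * s) := by
  set E := Real.exp ((g + ts) / ε) with hE
  have hEpos : 0 < E := Real.exp_pos _
  have hu : (t - ts) / ε ≠ 0 := by
    intro h0
    exact hne (by field_simp at h0; linarith)
  have key : Real.exp ((g + t) / ε) > E * ((t - ts) / ε + 1) := by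
    have : Real.exp ((g + t) / ε) = E * Real.exp ((t - ts) / ε) := by
      rw [hE, ← Real.exp_add]; ring_nf
    rw [this]
    exact mul_lt_mul_of_pos_left (Real.add_one_lt_exp hu) hEpos
  have hprod : (t - ts) * (b - E * s) ≤ 0 := by
    rcases le_or_gt (ε * Real.log b - ε * Real.log s - g) 0 with hc | hc
    · have hts' : ts = ε * Real.log b - ε * Real.log s - g := by
        rw [hts, min_eq_left hc]
      have : E = b / s := by
        rw [hE, hts']
        have : (g + (ε * Real.log b - ε * Real.log s - g)) / ε = Real.log b - Real.log s := by
          field_simp; ring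
        rw [this, ← Real.log_div hb.ne' hs.ne', Real.exp_log (div_pos hb hs)]
      rw [this]
      have : b / s * s = b := by field_simp
      rw [this]; ring_nf; simp
    · have hts' : ts = 0 := by rw [hts, min_eq_right hc.le]
      have hbE : E * s < b := by
        have h1 : g / ε < Real.log b - Real.log s := by
          rw [div_lt_iff₀ hε]
          nlinarith [hc]
        have h2 : Real.exp (g / ε) < b / s := by
          calc Real.exp (g / ε) < Real.exp (Real.log b - Real.log s) := Real.exp_lt_exp.mpr h1
            _ = b / s := by
                rw [← Real.log_div hb.ne' hs.ne', Real.exp_log (div_pos hb hs)]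
        have : E = Real.exp (g / ε) := by rw [hE, hts']; ring_nf
        rw [this]
        calc Real.exp (g / ε) * s < b / s * s := by exact mul_lt_mul_of_pos_right h2 hs
          _ = b := by field_simp
      have : t - ts ≤ 0 := by rw [hts']; linarith
      nlinarith
  have hmul : ε * (E * s * ((t - ts) / ε + 1)) < ε * (Real.exp ((g + t) / ε) * s) := by
    have := mul_lt_mul_of_pos_right key hs
    have := mul_lt_mul_of_pos_left this hε
    linarith [this]
  have expand : ε * (E * s * ((t - ts) / ε + 1)) = E * s * (t - ts) + ε * (E * s) := by
    field_simp
  nlinarith [hmul, hprod]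

lemma dbot_scalar_g_le (ε b s h t ts : ℝ) (hε : 0 < ε) (hb : 0 < b) (hs : 0 < s)
    (hts : ts = max (ε * Real.log b - ε * Real.log s - h) 0) (ht : 0 ≤ t) :
    t * b - ε * (Real.exp ((t + h) / ε) * s) ≤
      ts * b - ε * (Real.exp ((ts + h) / ε) * s) := by
  rcases eq_or_ne t ts with rfl | hne
  · exact le_refl _
  · exact (dbot_scalar_g_lt ε b s h t ts hε hb hs hts ht hne).le

lemma dbot_scalar_h_le (ε b s g t ts : ℝ) (hε : 0 < ε) (hb : 0 < b) (hs : 0 < s)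
    (hts : ts = min (ε * Real.log b - ε * Real.log s - g) 0) (ht : t ≤ 0) :
    t * b - ε * (Real.exp ((g + t) / ε) * s) ≤
      ts * b - ε * (Real.exp ((g + ts) / ε) * s) := by
  rcases eq_or_ne t ts with rfl | hne
  · exact le_refl _
  · exact (dbot_scalar_h_lt ε b s g t ts hε hb hs hts ht hne).le

/-- block coordinate ascent updates of the dual variables g ≥ 0
and h ≤ 0 of entropic DB-OT — the unique constrained maximizers are given by
the clipped log formulas. -/
theorem dbot_dual_g_h_updates
    (m n : ℕ) (hm : 0 < m) (hn : 0 < n)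
    (ε : ℝ) (hε : 0 < ε)
    (K : Matrix (Fin m) (Fin n) ℝ) (hK : ∀ i j, 0 < K i j)
    (a : Fin m → ℝ)
    (bd bu : Fin n → ℝ) (hbd : ∀ j, 0 < bd j) (hbu : ∀ j, 0 < bu j)
    (f : Fin m → ℝ)
    (s : Fin n → ℝ) (hs : ∀ j, s j = ∑ i, K i j * Real.exp (f i / ε)) :
    (∀ (h : Fin n → ℝ) (gstar : Fin n → ℝ),
      (∀ j, gstar j = max (ε * Real.log (bd j) - ε * Real.log (s j) - h j) 0) →
      gstar ∈ {g : Fin n → ℝ | ∀ j, 0 ≤ g j} ∧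
      IsMaxOn (fun g : Fin n → ℝ =>
          (∑ j, g j * bd j) - ε * ∑ j, Real.exp ((g j + h j) / ε) * s j)
        {g : Fin n → ℝ | ∀ j, 0 ≤ g j} gstar ∧
      (∀ g ∈ {g : Fin n → ℝ | ∀ j, 0 ≤ g j},
        IsMaxOn (fun g : Fin n → ℝ =>
            (∑ j, g j * bd j) - ε * ∑ j, Real.exp ((g j + h j) / ε) * s j)
          {g : Fin n → ℝ | ∀ j, 0 ≤ g j} g → g = gstar)) ∧
    (∀ (g : Fin n → ℝ) (hstar : Fin n → ℝ),
      (∀ j, hstar j = min (ε * Real.log (bu j) - ε * Real.log (s j) - g j) 0) →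
      hstar ∈ {h : Fin n → ℝ | ∀ j, h j ≤ 0} ∧
      IsMaxOn (fun h : Fin n → ℝ =>
          (∑ j, h j * bu j) - ε * ∑ j, Real.exp ((g j + h j) / ε) * s j)
        {h : Fin n → ℝ | ∀ j, h j ≤ 0} hstar ∧
      (∀ h ∈ {h : Fin n → ℝ | ∀ j, h j ≤ 0},
        IsMaxOn (fun h : Fin n → ℝ =>
            (∑ j, h j * bu j) - ε * ∑ j, Real.exp ((g j + h j) / ε) * s j)
          {h : Fin n → ℝ | ∀ j, h j ≤ 0} h → h = hstar)) := by
  have hspos : ∀ j, 0 < s j := by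
    intro j
    rw [hs j]
    have : Nonempty (Fin m) := ⟨⟨0, hm⟩⟩
    exact Finset.sum_pos (fun i _ => mul_pos (hK i j) (Real.exp_pos _))
      Finset.univ_nonempty
  constructor
  · intro h gstar hg
    have hform : ∀ g : Fin n → ℝ,
        (∑ j, g j * bd j) - ε * ∑ j, Real.exp ((g j + h j) / ε) * s j
          = ∑ j, (g j * bd j - ε * (Real.exp ((g j + h j) / ε) * s j)) := by
      intro g
      rw [Finset.mul_sum, ← Finset.sum_sub_distrib]
    have hmem : gstar ∈ {g : Fin n → ℝ | ∀ j, 0 ≤ g j} := by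
      intro j; rw [hg j]; exact le_max_right _ _
    have hle : ∀ (g : Fin n → ℝ), (∀ j, 0 ≤ g j) → ∀ j,
        g j * bd j - ε * (Real.exp ((g j + h j) / ε) * s j)
          ≤ gstar j * bd j - ε * (Real.exp ((gstar j + h j) / ε) * s j) := by
      intro g hg' j
      exact dbot_scalar_g_le ε (bd j) (s j) (h j) (g j) (gstar j) hε (hbd j)
        (hspos j) (hg j) (hg' j)
    have hmax : IsMaxOn (fun g : Fin n → ℝ =>
          (∑ j, g j * bd j) - ε * ∑ j, Real.exp ((g j + h j) / ε) * s j)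
        {g : Fin n → ℝ | ∀ j, 0 ≤ g j} gstar := by
      intro g hg'
      simp only [Set.mem_setOf_eq] at hg' ⊢
      rw [hform g, hform gstar]
      exact Finset.sum_le_sum (fun j _ => hle g hg' j)
    refine ⟨hmem, hmax, ?_⟩
    intro g hg' hgmax
    have heq : (∑ j, g j * bd j) - ε * ∑ j, Real.exp ((g j + h j) / ε) * s j
        = (∑ j, gstar j * bd j) - ε * ∑ j, Real.exp ((gstar j + h j) / ε) * s j :=
      le_antisymm (hmax hg') (hgmax hmem)
    funext j
    by_contra hne
    have hstrict : ∑ j, (g j * bd j - ε * (Real.exp ((g j + h j) / ε) * s j))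
        < ∑ j, (gstar j * bd j - ε * (Real.exp ((gstar j + h j) / ε) * s j)) := by
      refine Finset.sum_lt_sum (fun i _ => hle g hg' i) ⟨j, Finset.mem_univ j, ?_⟩
      exact dbot_scalar_g_lt ε (bd j) (s j) (h j) (g j) (gstar j) hε (hbd j)
        (hspos j) (hg j) (hg' j) hne
    rw [← hform g, ← hform gstar, heq] at hstrict
    exact lt_irrefl _ hstrict
  · intro g hstar hh
    have hform : ∀ h : Fin n → ℝ,
        (∑ j, h j * bu j) - ε * ∑ j, Real.exp ((g j + h j) / ε) * s j
          = ∑ j, (h j * bu j - ε * (Real.exp ((g j + h j) / ε) * s j)) := by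
      intro h
      rw [Finset.mul_sum, ← Finset.sum_sub_distrib]
    have hmem : hstar ∈ {h : Fin n → ℝ | ∀ j, h j ≤ 0} := by
      intro j; rw [hh j]; exact min_le_right _ _
    have hle : ∀ (h : Fin n → ℝ), (∀ j, h j ≤ 0) → ∀ j,
        h j * bu j - ε * (Real.exp ((g j + h j) / ε) * s j)
          ≤ hstar j * bu j - ε * (Real.exp ((g j + hstar j) / ε) * s j) := by
      intro h hh' j
      exact dbot_scalar_h_le ε (bu j) (s j) (g j) (h j) (hstar j) hε (hbu j)
        (hspos j) (hh j) (hh' j)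
    have hmax : IsMaxOn (fun h : Fin n → ℝ =>
          (∑ j, h j * bu j) - ε * ∑ j, Real.exp ((g j + h j) / ε) * s j)
        {h : Fin n → ℝ | ∀ j, h j ≤ 0} hstar := by
      intro h hh'
      simp only [Set.mem_setOf_eq] at hh' ⊢
      rw [hform h, hform hstar]
      exact Finset.sum_le_sum (fun j _ => hle h hh' j)
    refine ⟨hmem, hmax, ?_⟩
    intro h hh' hhmax
    have heq : (∑ j, h j * bu j) - ε * ∑ j, Real.exp ((g j + h j) / ε) * s j
        = (∑ j, hstar j * bu j) - ε * ∑ j, Real.exp ((g j + hstar j) / ε) * s j :=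
      le_antisymm (hmax hh') (hhmax hmem)
    funext j
    by_contra hne
    have hstrict : ∑ j, (h j * bu j - ε * (Real.exp ((g j + h j) / ε) * s j))
        < ∑ j, (hstar j * bu j - ε * (Real.exp ((g j + hstar j) / ε) * s j)) := by
      refine Finset.sum_lt_sum (fun i _ => hle h hh' i) ⟨j, Finset.mem_univ j, ?_⟩
      exact dbot_scalar_h_lt ε (bu j) (s j) (g j) (h j) (hstar j) hε (hbu j)
        (hspos j) (hh j) (hh' j) hne
    rw [← hform h, ← hform hstar, heq] at hstrict
    exact lt_irrefl _ hstrict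
end

section
/- Let m, n be positive integers, C ∈ ℝ^{m×n}, and ε > 0. Then the unique minimizer of ⟨C,P⟩ - εH(P) over the set U(a) = {P ∈ ℝ^{m×n} : P_{ij} ≥ 0, Σ_{j=1}^n P_{ij} = 1/m for every i} is given by P*_{ij} = exp(-C_{ij}/ε) / ( m·Σ_{k=1}^n exp(-C_{ik}/ε) ); that is, each row of m·P* is the softmax of the vector (-C_{i1}/ε, …, -C_{in}/ε). -/
/-!
Writing `Z i = ∑ k, exp (-C i k / ε)`, the entries of `P*` satisfy
`C i j = -ε log (m Z i) - ε log P*ᵢⱼ`: the cost is in Gibbs form relative to `P*`, up to a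
potential that depends on the row only. Since every `P ∈ U(a)` has the same row sums as `P*`,
the row potentials contribute nothing to the difference of objectives, and
`F P - F P* = ε ∑ᵢⱼ P*ᵢⱼ klFun (Pᵢⱼ / P*ᵢⱼ)`, a generalized Kullback–Leibler divergence, which is
nonnegative and vanishes only at `P = P*`.
-/

open Real InformationTheory

lemma mul_klFun_div {x t : ℝ} (ht : 0 < t) :
    t * klFun (x / t) = x * (log x - log t) + t - x := by
  rcases eq_or_ne x 0 with rfl | hx
  · simp [klFun_zero]
  · rw [klFun_apply, log_div hx ht.ne']
    field_simp

lemma mul_klFun_div_nonneg {x t : ℝ} (hx : 0 ≤ x) (ht : 0 < t) : 0 ≤ t * klFun (x / t) :=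
  mul_nonneg ht.le (klFun_nonneg (div_nonneg hx ht.le))

section GeneralizedKL

variable {ι : Type*} [Fintype ι] {x q : ι → ℝ}

lemma sum_mul_klFun_div_nonneg (hx : ∀ i, 0 ≤ x i) (hq : ∀ i, 0 < q i) :
    0 ≤ ∑ i, q i * klFun (x i / q i) :=
  Finset.sum_nonneg fun i _ => mul_klFun_div_nonneg (hx i) (hq i)

lemma sum_mul_klFun_div_eq_zero_iff (hx : ∀ i, 0 ≤ x i) (hq : ∀ i, 0 < q i) :
    ∑ i, q i * klFun (x i / q i) = 0 ↔ x = q := by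
  have hterm (i : ι) : q i * klFun (x i / q i) = 0 ↔ x i = q i := by
    rw [mul_eq_zero_iff_left (hq i).ne', klFun_eq_zero_iff (div_nonneg (hx i) (hq i).le),
      div_eq_one_iff_eq (hq i).ne']
  rw [Finset.sum_eq_zero_iff_of_nonneg fun i _ => mul_klFun_div_nonneg (hx i) (hq i)]
  simp only [Finset.mem_univ, true_implies, hterm, funext_iff]

variable {κ : Type*} [Fintype κ] {P Q : Matrix ι κ ℝ}

lemma sum_sum_mul_klFun_div_nonneg (hP : ∀ i j, 0 ≤ P i j) (hQ : ∀ i j, 0 < Q i j) :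
    0 ≤ ∑ i, ∑ j, Q i j * klFun (P i j / Q i j) :=
  Finset.sum_nonneg fun i _ => sum_mul_klFun_div_nonneg (hP i) (hQ i)

lemma sum_sum_mul_klFun_div_eq_zero_iff (hP : ∀ i j, 0 ≤ P i j) (hQ : ∀ i j, 0 < Q i j) :
    ∑ i, ∑ j, Q i j * klFun (P i j / Q i j) = 0 ↔ P = Q := by
  rw [Finset.sum_eq_zero_iff_of_nonneg fun i _ => sum_mul_klFun_div_nonneg (hP i) (hQ i)]
  simp only [Finset.mem_univ, true_implies, sum_mul_klFun_div_eq_zero_iff (hP _) (hQ _)]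
  exact funext_iff.symm

end GeneralizedKL

section EntropicObjective

variable {ι κ : Type*} [Fintype ι] [Fintype κ]

noncomputable def entropicObjective (C : Matrix ι κ ℝ) (ε : ℝ) (P : Matrix ι κ ℝ) : ℝ :=
  (∑ i, ∑ j, C i j * P i j) - ε * (-(∑ i, ∑ j, P i j * (log (P i j) - 1)))

lemma entropicObjective_sub_eq_sum_klFun {C P Q : Matrix ι κ ℝ} {ε : ℝ} (μ : ι → ℝ)
    (hQ : ∀ i j, 0 < Q i j) (hC : ∀ i j, C i j = μ i - ε * log (Q i j))
    (hrow : ∀ i, ∑ j, P i j = ∑ j, Q i j) :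
    entropicObjective C ε P - entropicObjective C ε Q =
      ε * ∑ i, ∑ j, Q i j * klFun (P i j / Q i j) := by
  have hμ : ∑ i, ∑ j, μ i * (P i j - Q i j) = 0 := by
    simp [← Finset.mul_sum, Finset.sum_sub_distrib, hrow]
  rw [← sub_eq_zero, ← hμ]
  simp only [entropicObjective, hC, mul_klFun_div (hQ _ _), Finset.mul_sum,
    ← Finset.sum_neg_distrib, ← Finset.sum_sub_distrib]
  refine Finset.sum_congr rfl fun i _ => Finset.sum_congr rfl fun j _ => ?_
  ring

end EntropicObjective

theorem entropic_ot_rowsum_softmax_general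
    (m n : ℕ) (hn : 0 < n)
    (C : Matrix (Fin m) (Fin n) ℝ) (ε : ℝ) (hε : 0 < ε)
    (S : Set (Matrix (Fin m) (Fin n) ℝ))
    (hS : S = {P | (∀ i j, 0 ≤ P i j) ∧ (∀ i, ∑ j, P i j = 1 / (m : ℝ))})
    (Pstar : Matrix (Fin m) (Fin n) ℝ)
    (hPstar : ∀ i j, Pstar i j =
      Real.exp (-(C i j) / ε) / ((m : ℝ) * ∑ k, Real.exp (-(C i k) / ε))) :
    Pstar ∈ S ∧
    IsMinOn (fun P : Matrix (Fin m) (Fin n) ℝ =>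
        (∑ i, ∑ j, C i j * P i j) -
          ε * (-(∑ i, ∑ j, P i j * (Real.log (P i j) - 1)))) S Pstar ∧
    (∀ P ∈ S,
      IsMinOn (fun P : Matrix (Fin m) (Fin n) ℝ =>
        (∑ i, ∑ j, C i j * P i j) -
          ε * (-(∑ i, ∑ j, P i j * (Real.log (P i j) - 1)))) S P → P = Pstar) := by
  change _ ∧ IsMinOn (entropicObjective C ε) S Pstar ∧
    ∀ P ∈ S, IsMinOn (entropicObjective C ε) S P → P = Pstar
  have hZ (i : Fin m) : 0 < ∑ k, exp (-(C i k) / ε) :=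
    Finset.sum_pos (fun k _ => exp_pos _) (Finset.univ_nonempty_iff.2 (Fin.pos_iff_nonempty.1 hn))
  have hmZ (i : Fin m) : 0 < (m : ℝ) * ∑ k, exp (-(C i k) / ε) :=
    mul_pos (Nat.cast_pos.2 i.pos) (hZ i)
  have hpos (i j) : 0 < Pstar i j := hPstar i j ▸ div_pos (exp_pos _) (hmZ i)
  have hrow (i) : ∑ j, Pstar i j = 1 / m := by
    rw [Finset.sum_congr rfl fun j _ => hPstar i j, ← Finset.sum_div,
      div_mul_cancel_right₀ (hZ i).ne', one_div]
  have hgibbs (i j) : C i j = -ε * log (m * ∑ k, exp (-(C i k) / ε)) - ε * log (Pstar i j) := by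
    rw [hPstar, log_div (exp_pos _).ne' (hmZ i).ne', log_exp]
    field_simp
    ring
  have hgap (P : Matrix (Fin m) (Fin n) ℝ) (hrowP : ∀ i, ∑ j, P i j = 1 / m) :=
    entropicObjective_sub_eq_sum_klFun _ hpos hgibbs fun i => (hrowP i).trans (hrow i).symm
  have hmem : Pstar ∈ S := hS ▸ ⟨fun i j => (hpos i j).le, hrow⟩
  refine ⟨hmem, fun P hP => ?_, fun P hP hmin => ?_⟩
  all_goals obtain ⟨hP0, hP1⟩ := hS ▸ hP
  · exact sub_nonneg.1 <|
      (hgap P hP1).symm ▸ mul_nonneg hε.le (sum_sum_mul_klFun_div_nonneg hP0 hpos)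
  · have hle : ε * _ ≤ 0 := (hgap P hP1).symm.trans_le (sub_nonpos.2 (hmin hmem))
    exact (sum_sum_mul_klFun_div_eq_zero_iff hP0 hpos).1 <|
      (nonpos_of_mul_nonpos_right hle hε).antisymm (sum_sum_mul_klFun_div_nonneg hP0 hpos)

/-- the unique minimizer of the entropic OT objective over
nonnegative matrices whose every row sums to 1/m is the row-wise softmax of
-C/ε scaled by 1/m. -/
theorem entropic_ot_rowsum_softmax
    (m n : ℕ) (hm : 0 < m) (hn : 0 < n)
    (C : Matrix (Fin m) (Fin n) ℝ) (ε : ℝ) (hε : 0 < ε)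
    (S : Set (Matrix (Fin m) (Fin n) ℝ))
    (hS : S = {P | (∀ i j, 0 ≤ P i j) ∧ (∀ i, ∑ j, P i j = 1 / (m : ℝ))})
    (Pstar : Matrix (Fin m) (Fin n) ℝ)
    (hPstar : ∀ i j, Pstar i j =
      Real.exp (-(C i j) / ε) / ((m : ℝ) * ∑ k, Real.exp (-(C i k) / ε))) :
    Pstar ∈ S ∧
    IsMinOn (fun P : Matrix (Fin m) (Fin n) ℝ =>
        (∑ i, ∑ j, C i j * P i j) -
          ε * (-(∑ i, ∑ j, P i j * (Real.log (P i j) - 1)))) S Pstar ∧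
    (∀ P ∈ S,
      IsMinOn (fun P : Matrix (Fin m) (Fin n) ℝ =>
        (∑ i, ∑ j, C i j * P i j) -
          ε * (-(∑ i, ∑ j, P i j * (Real.log (P i j) - 1)))) S P → P = Pstar) :=
  entropic_ot_rowsum_softmax_general m n hn C ε hε S hS Pstar hPstar
end

section
/- Let m, n be positive integers and let C ∈ ℝ^{m×n} have strictly positive entries. Let a^d, a^u ∈ ℝ^m satisfy 0 ≤ a^d ≤ a^u entrywise and let b^u ∈ ℝ^n have nonnegative entries, and suppose the feasible set S = {P ∈ ℝ^{m×n} : P_{ij} ≥ 0, a^d ≤ P·1_n ≤ a^u entrywise, Pᵀ·1_m ≤ b^u entrywise} is nonempty. Then the minimum of ⟨C,P⟩ over S is attained, and every minimizer P of ⟨C,P⟩ over S has total mass Σ_{ij} P_{ij} = Σ_i a^d_i; in particular the upper bound a^u on the source marginal is never active at an optimum with strictly positive cost. -/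
open Real

/-- with strictly positive costs, a doubly bounded source
marginal a^d ≤ P·1 ≤ a^u and an upper-bounded target marginal Pᵀ·1 ≤ b^u, the
linear OT minimum is attained and every minimizer has total mass Σ_i a^d_i
(the source upper bound is never active). -/
theorem source_double_bound_degenerates
    (m n : ℕ) (hm : 0 < m) (hn : 0 < n)
    (C : Matrix (Fin m) (Fin n) ℝ) (hC : ∀ i j, 0 < C i j)
    (ad au : Fin m → ℝ) (had : ∀ i, 0 ≤ ad i) (hadu : ∀ i, ad i ≤ au i)
    (bu : Fin n → ℝ) (hbu : ∀ j, 0 ≤ bu j)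
    (S : Set (Matrix (Fin m) (Fin n) ℝ))
    (hS : S = {P | (∀ i j, 0 ≤ P i j) ∧ (∀ i, ad i ≤ ∑ j, P i j) ∧
            (∀ i, ∑ j, P i j ≤ au i) ∧ (∀ j, ∑ i, P i j ≤ bu j)})
    (hne : S.Nonempty) :
    (∃ P ∈ S, IsMinOn (fun P : Matrix (Fin m) (Fin n) ℝ =>
        ∑ i, ∑ j, C i j * P i j) S P) ∧
    (∀ P ∈ S, IsMinOn (fun P : Matrix (Fin m) (Fin n) ℝ =>
        ∑ i, ∑ j, C i j * P i j) S P →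
      ∑ i, ∑ j, P i j = ∑ i, ad i) := by
  have hrowcont : ∀ i : Fin m, Continuous (fun P : Matrix (Fin m) (Fin n) ℝ => ∑ j, P i j) :=
    fun i => continuous_finset_sum _ fun j _ => (continuous_apply j).comp (continuous_apply i)
  have hcolcont : ∀ j : Fin n, Continuous (fun P : Matrix (Fin m) (Fin n) ℝ => ∑ i, P i j) :=
    fun j => continuous_finset_sum _ fun i _ => (continuous_apply j).comp (continuous_apply i)
  have hclosed : IsClosed S := by
    rw [hS]
    have : {P : Matrix (Fin m) (Fin n) ℝ | (∀ i j, 0 ≤ P i j) ∧ (∀ i, ad i ≤ ∑ j, P i j) ∧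
            (∀ i, ∑ j, P i j ≤ au i) ∧ (∀ j, ∑ i, P i j ≤ bu j)}
        = (⋂ i, ⋂ j, {P : Matrix (Fin m) (Fin n) ℝ | 0 ≤ P i j}) ∩
          ((⋂ i, {P : Matrix (Fin m) (Fin n) ℝ | ad i ≤ ∑ j, P i j}) ∩
           ((⋂ i, {P : Matrix (Fin m) (Fin n) ℝ | ∑ j, P i j ≤ au i}) ∩
            (⋂ j, {P : Matrix (Fin m) (Fin n) ℝ | ∑ i, P i j ≤ bu j}))) := by
      ext P; simp [Set.mem_iInter, Set.mem_setOf_eq]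
    rw [this]
    refine IsClosed.inter ?_ (IsClosed.inter ?_ (IsClosed.inter ?_ ?_))
    · exact isClosed_iInter fun i => isClosed_iInter fun j =>
        isClosed_le continuous_const ((continuous_apply j).comp (continuous_apply i))
    · exact isClosed_iInter fun i => isClosed_le continuous_const (hrowcont i)
    · exact isClosed_iInter fun i => isClosed_le (hrowcont i) continuous_const
    · exact isClosed_iInter fun j => isClosed_le (hcolcont j) continuous_const
  have hKc : IsCompact (Set.univ.pi fun i : Fin m =>
      (Set.univ.pi fun _ : Fin n => Set.Icc (0:ℝ) (au i))) :=
    isCompact_univ_pi fun i => isCompact_univ_pi fun _ => isCompact_Icc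
  have hsub : S ⊆ Set.univ.pi fun i : Fin m =>
      (Set.univ.pi fun _ : Fin n => Set.Icc (0:ℝ) (au i)) := by
    intro P hP
    rw [hS] at hP
    obtain ⟨h0, _, h2, _⟩ := hP
    intro i _ j _
    refine ⟨h0 i j, ?_⟩
    calc P i j ≤ ∑ j', P i j' :=
          Finset.single_le_sum (fun j' _ => h0 i j') (Finset.mem_univ j)
      _ ≤ au i := h2 i
  have hScomp : IsCompact S := hKc.of_isClosed_subset hclosed hsub
  have hcostcont : Continuous (fun P : Matrix (Fin m) (Fin n) ℝ => ∑ i, ∑ j, C i j * P i j) :=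
    continuous_finset_sum _ fun i _ => continuous_finset_sum _ fun j _ =>
      (continuous_const.mul ((continuous_apply j).comp (continuous_apply i)))
  constructor
  · exact hScomp.exists_isMinOn hne hcostcont.continuousOn
  · intro P hPS hmin
    have hPfeas := hS ▸ hPS
    obtain ⟨h0, h1, h2, h3⟩ := hPfeas
    have hrow : ∀ i, ∑ j, P i j = ad i := by
      intro i
      by_contra hne'
      have hlt : ad i < ∑ j, P i j := lt_of_le_of_ne (h1 i) (Ne.symm hne')
      have hrpos : 0 < ∑ j, P i j := lt_of_le_of_lt (had i) hlt
      set r := ∑ j, P i j with hr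
      set t := ad i / r with ht
      have ht0 : 0 ≤ t := div_nonneg (had i) hrpos.le
      have ht1 : t < 1 := (div_lt_one hrpos).mpr hlt
      set Q : Matrix (Fin m) (Fin n) ℝ := fun i' j => if i' = i then t * P i' j else P i' j with hQ
      have hQrow : ∀ i', ∑ j, Q i' j = if i' = i then t * r else ∑ j, P i' j := by
        intro i'
        by_cases h : i' = i <;> simp [hQ, h, Finset.mul_sum, hr]
      have hQS : Q ∈ S := by
        rw [hS]
        refine ⟨?_, ?_, ?_, ?_⟩
        · intro i' j
          by_cases h : i' = i <;> simp [hQ, h]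
          · exact mul_nonneg ht0 (h ▸ h0 i j)
          · exact h0 i' j
        · intro i'
          rw [hQrow i']
          by_cases h : i' = i
          · simp [h, ht, div_mul_cancel₀ _ hrpos.ne']
          · simp [h]; exact h1 i'
        · intro i'
          rw [hQrow i']
          by_cases h : i' = i
          · simp [h, ht, div_mul_cancel₀ _ hrpos.ne']
            exact hadu i
          · simp [h]; exact h2 i'
        · intro j
          refine le_trans (Finset.sum_le_sum fun i' _ => ?_) (h3 j)
          by_cases h : i' = i
          · simp [hQ, h]
            nlinarith [h0 i j, h ▸ h0 i' j]
          · simp [hQ, h]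
      have hjpos : ∃ j, 0 < P i j := by
        by_contra hcon
        push_neg at hcon
        have : ∑ j, P i j ≤ 0 := Finset.sum_nonpos fun j _ => hcon j
        linarith
      obtain ⟨j0, hj0⟩ := hjpos
      have hcpos : 0 < ∑ j, C i j * P i j := by
        have hterm : C i j0 * P i j0 ≤ ∑ j, C i j * P i j :=
          Finset.single_le_sum (fun j _ => mul_nonneg (hC i j).le (h0 i j)) (Finset.mem_univ j0)
        nlinarith [hC i j0]
      have hdiff : (∑ i', ∑ j, C i' j * P i' j) - (∑ i', ∑ j, C i' j * Q i' j)
          = (1 - t) * ∑ j, C i j * P i j := by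
        rw [← Finset.sum_sub_distrib]
        rw [Finset.sum_eq_single_of_mem i (Finset.mem_univ i)]
        · rw [← Finset.sum_sub_distrib, Finset.mul_sum]
          congr 1; ext j
          simp [hQ]; ring
        · intro i' _ h
          rw [← Finset.sum_sub_distrib]
          apply Finset.sum_eq_zero
          intro j _
          simp [hQ, h]
      have hle := hmin hQS
      simp only [Set.mem_setOf_eq] at hle
      have : (0:ℝ) < (1 - t) * ∑ j, C i j * P i j := mul_pos (by linarith) hcpos
      linarith [hle, hdiff]
    calc ∑ i, ∑ j, P i j = ∑ i, ad i := Finset.sum_congr rfl fun i _ => hrow i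
end
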